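/- arXiv:2401.03119 — 7 statements merged into one kernel-verified Lean document; each statement's English description precedes it below -/
import Mathlib

section
/- For any real constants α_1,…,α_{2k+2}, β_1,…,β_{2k+2}, γ_1,…,γ_{2k}, δ_1,…,δ_{2k}, the coefficient of x^{4k+2} y^{4k+2} in the polynomial ∏_{j=1}^{2k+2} (x-α_j)(y-β_j) · ∏_{j=1}^{2k} (x-y-γ_j)(x+y-δ_j) equals (-1)^k * binomial(2k, k), and in particular is nonzero. -/
/-!
The monomial `x^(4k+2) y^(4k+2)` has the maximal total degree `8k+4` of the product, so its
coefficient only depends on the top homogeneous component, which is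
`(xy)^(2k+2) (x² - y²)^(2k)`. The coefficient sought is then that of `x^(2k) y^(2k)` in
`(x² - y²)^(2k)`, namely the middle binomial term `(-1)^k (2k choose k)`.
-/

open MvPolynomial Finset

namespace MvPolynomial

variable {σ R : Type*}

section CommSemiring

variable [CommSemiring R]

theorem homogeneousComponent_mul_of_totalDegree_le {p q : MvPolynomial σ R} {m n : ℕ}
    (hp : p.totalDegree ≤ m) (hq : q.totalDegree ≤ n) :
    homogeneousComponent (m + n) (p * q) = homogeneousComponent m p * homogeneousComponent n q := by
  classical
  ext d
  rw [coeff_homogeneousComponent]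
  split_ifs with hd
  · rw [coeff_mul, coeff_mul]
    refine sum_congr rfl fun ab hab => ?_
    rw [HasAntidiagonal.mem_antidiagonal] at hab
    have hdeg : ab.1.degree + ab.2.degree = m + n := by rw [← map_add, hab, hd]
    rw [coeff_homogeneousComponent, coeff_homogeneousComponent]
    rcases lt_trichotomy ab.1.degree m with hlt | heq | hgt
    · have : q.totalDegree < ab.2.degree := by omega
      simp [coeff_eq_zero_of_totalDegree_lt this]
    · rw [if_pos heq, if_pos (by omega)]
    · have : p.totalDegree < ab.1.degree := by omega
      simp [coeff_eq_zero_of_totalDegree_lt this]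
  · exact (((homogeneousComponent_isHomogeneous m p).mul
      (homogeneousComponent_isHomogeneous n q)).coeff_eq_zero hd).symm

theorem homogeneousComponent_prod_of_totalDegree_le {ι : Type*} (s : Finset ι)
    {f : ι → MvPolynomial σ R} {d : ι → ℕ} (hf : ∀ i ∈ s, (f i).totalDegree ≤ d i) :
    homogeneousComponent (∑ i ∈ s, d i) (∏ i ∈ s, f i) =
      ∏ i ∈ s, homogeneousComponent (d i) (f i) := by
  classical
  induction s using Finset.induction_on with
  | empty => simp
  | insert a s ha ih =>
    have hs : ∀ i ∈ s, (f i).totalDegree ≤ d i := fun i hi => hf i (mem_insert_of_mem hi)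
    rw [sum_insert ha, prod_insert ha, prod_insert ha,
      homogeneousComponent_mul_of_totalDegree_le (hf a (mem_insert_self a s))
        ((totalDegree_finsetProd s f).trans (sum_le_sum hs)), ih hs]

end CommSemiring

section CommRing

variable [CommRing R]

theorem homogeneousComponent_sub_C {n : ℕ} (hn : n ≠ 0) (p : MvPolynomial σ R) (c : R) :
    homogeneousComponent n (p - C c) = homogeneousComponent n p := by
  rw [map_sub, homogeneousComponent_of_mem (isHomogeneous_C σ c), if_neg hn, sub_zero]

theorem totalDegree_sub_C_le_one {p : MvPolynomial σ R} (hp : p.IsHomogeneous 1) (a : R) :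
    (p - C a).totalDegree ≤ 1 :=
  (totalDegree_sub_C_le p a).trans hp.totalDegree_le

theorem totalDegree_sub_C_mul_sub_C_le_two {p q : MvPolynomial σ R} (hp : p.IsHomogeneous 1)
    (hq : q.IsHomogeneous 1) (a b : R) : ((p - C a) * (q - C b)).totalDegree ≤ 2 :=
  (totalDegree_mul _ _).trans
    (add_le_add (totalDegree_sub_C_le_one hp a) (totalDegree_sub_C_le_one hq b))

theorem homogeneousComponent_two_sub_C_mul_sub_C {p q : MvPolynomial σ R} (hp : p.IsHomogeneous 1)
    (hq : q.IsHomogeneous 1) (a b : R) :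
    homogeneousComponent 2 ((p - C a) * (q - C b)) = p * q := by
  rw [← one_add_one_eq_two, homogeneousComponent_mul_of_totalDegree_le
      (totalDegree_sub_C_le_one hp a) (totalDegree_sub_C_le_one hq b),
    homogeneousComponent_sub_C one_ne_zero, homogeneousComponent_sub_C one_ne_zero,
    homogeneousComponent_eq_self hp, homogeneousComponent_eq_self hq]

theorem totalDegree_prod_sub_C_mul_sub_C_le {ι : Type*} (s : Finset ι)
    {p q : ι → MvPolynomial σ R} (hp : ∀ i ∈ s, (p i).IsHomogeneous 1)
    (hq : ∀ i ∈ s, (q i).IsHomogeneous 1) (a b : ι → R) :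
    (∏ i ∈ s, (p i - C (a i)) * (q i - C (b i))).totalDegree ≤ 2 * #s := by
  rw [mul_comm, ← smul_eq_mul, ← sum_const]
  exact (totalDegree_finsetProd _ _).trans (sum_le_sum fun i hi =>
    totalDegree_sub_C_mul_sub_C_le_two (hp i hi) (hq i hi) _ _)

theorem homogeneousComponent_prod_sub_C_mul_sub_C {ι : Type*} (s : Finset ι)
    {p q : ι → MvPolynomial σ R} (hp : ∀ i ∈ s, (p i).IsHomogeneous 1)
    (hq : ∀ i ∈ s, (q i).IsHomogeneous 1) (a b : ι → R) :
    homogeneousComponent (2 * #s) (∏ i ∈ s, (p i - C (a i)) * (q i - C (b i))) =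
      ∏ i ∈ s, p i * q i := by
  rw [mul_comm, ← smul_eq_mul, ← sum_const, homogeneousComponent_prod_of_totalDegree_le _
    fun i hi => totalDegree_sub_C_mul_sub_C_le_two (hp i hi) (hq i hi) _ _]
  exact prod_congr rfl fun i hi =>
    homogeneousComponent_two_sub_C_mul_sub_C (hp i hi) (hq i hi) _ _

theorem coeff_X_sq_sub_X_sq_pow {a b : σ} (hab : a ≠ b) {n i : ℕ} (hi : i ≤ n) :
    coeff (Finsupp.single a (2 * i) + Finsupp.single b (2 * (n - i)))
        ((X a ^ 2 - X b ^ 2) ^ n : MvPolynomial σ R) =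
      (-1) ^ (n - i) * n.choose i := by
  classical
  have hterm (j : ℕ) : (X a ^ 2) ^ j * (-X b ^ 2) ^ (n - j) * (n.choose j : MvPolynomial σ R) =
      monomial (Finsupp.single a (2 * j) + Finsupp.single b (2 * (n - j)))
        ((-1 : R) ^ (n - j) * n.choose j) := by
    rw [monomial_single_add, ← C_mul_X_pow_eq_monomial, C_mul, map_pow, map_neg, map_one,
      map_natCast]
    ring
  have hexp (j : ℕ) (h : Finsupp.single a (2 * j) + Finsupp.single b (2 * (n - j)) =
      Finsupp.single a (2 * i) + Finsupp.single b (2 * (n - i))) : j = i := by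
    simpa [hab.symm] using DFunLike.congr_fun h a
  rw [sub_eq_add_neg, add_pow, coeff_sum, Finset.sum_eq_single i]
  · rw [hterm, coeff_monomial, if_pos rfl]
  · intro j _ hji
    rw [hterm, coeff_monomial, if_neg (fun h => hji (hexp j h))]
  · exact fun h => absurd (mem_range.2 (Nat.lt_succ_of_le hi)) h

theorem coeff_X_mul_X_pow_mul_sub_mul_add_pow {a b : σ} (hab : a ≠ b) (r : ℕ) {n i : ℕ}
    (hi : i ≤ n) :
    coeff (Finsupp.single a (2 * i + r) + Finsupp.single b (2 * (n - i) + r))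
        ((X a * X b) ^ r * ((X a - X b) * (X a + X b)) ^ n : MvPolynomial σ R) =
      (-1) ^ (n - i) * n.choose i := by
  have hX : (X a * X b) ^ r = (monomial (Finsupp.single a r + Finsupp.single b r) 1 :
      MvPolynomial σ R) := by
    rw [monomial_single_add, ← X_pow_eq_monomial, mul_pow]
  rw [Finsupp.single_add, Finsupp.single_add, add_add_add_comm, mul_comm ((X a * X b) ^ r), hX,
    coeff_mul_monomial, mul_one, mul_comm (X a - X b), ← sq_sub_sq,
    coeff_X_sq_sub_X_sq_pow hab hi]

end CommRing

end MvPolynomial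

theorem stmt_2 (k : ℕ) (α β γ δ : ℕ → ℝ) :
    MvPolynomial.coeff (Finsupp.single 0 (4 * k + 2) + Finsupp.single 1 (4 * k + 2))
      ((∏ j ∈ Finset.Icc 1 (2 * k + 2), (X 0 - C (α j)) * (X 1 - C (β j))) *
       (∏ j ∈ Finset.Icc 1 (2 * k), (X 0 - X 1 - C (γ j)) * (X 0 + X 1 - C (δ j))) :
        MvPolynomial (Fin 2) ℝ)
      = (-1 : ℝ) ^ k * Nat.choose (2 * k) k ∧
    ((-1 : ℝ) ^ k * Nat.choose (2 * k) k : ℝ) ≠ 0 := by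
  have hX (i : Fin 2) : (X i : MvPolynomial (Fin 2) ℝ).IsHomogeneous 1 := isHomogeneous_X ℝ i
  have hsub := (hX 0).sub (hX 1)
  have hadd := (hX 0).add (hX 1)
  have hdeg :
      (Finsupp.single 0 (4 * k + 2) + Finsupp.single 1 (4 * k + 2) : Fin 2 →₀ ℕ).degree =
        2 * #(Icc 1 (2 * k + 2)) + 2 * #(Icc 1 (2 * k)) := by
    simp only [map_add, Finsupp.degree_single, Nat.card_Icc]
    omega
  have hcentral := coeff_X_mul_X_pow_mul_sub_mul_add_pow (R := ℝ) (zero_ne_one' (Fin 2))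
    (2 * k + 2) (n := 2 * k) (i := k) (by omega)
  rw [show 2 * k - k = k by omega, show 2 * k + (2 * k + 2) = 4 * k + 2 by ring] at hcentral
  rw [← (coeff_homogeneousComponent _ _ _).trans (if_pos hdeg),
    homogeneousComponent_mul_of_totalDegree_le
      (totalDegree_prod_sub_C_mul_sub_C_le _ (fun _ _ => hX 0) (fun _ _ => hX 1) _ _)
      (totalDegree_prod_sub_C_mul_sub_C_le _ (fun _ _ => hsub) (fun _ _ => hadd) _ _),
    homogeneousComponent_prod_sub_C_mul_sub_C _ (fun _ _ => hX 0) (fun _ _ => hX 1),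
    homogeneousComponent_prod_sub_C_mul_sub_C _ (fun _ _ => hsub) (fun _ _ => hadd),
    prod_const, prod_const, Nat.card_Icc, Nat.card_Icc, Nat.add_sub_cancel, Nat.add_sub_cancel,
    hcentral]
  exact ⟨rfl, mul_ne_zero (pow_ne_zero _ (by norm_num))
    (Nat.cast_ne_zero.2 (Nat.choose_pos (by omega)).ne')⟩
end

section
/- The coefficient of x^{4k} y^{4k} in f_1(x,y) = (x-α_0) ∏_{j=1}^{2k} (x-α_j)(y-β_j)(x-y-γ_j)(x+y-δ_j) equals (-1)^k [ binomial(2k,k) * Σ_{j=0}^{2k} (-α_j) + binomial(2k-1,k-1) * Σ_{j=1}^{2k} (-γ_j) + binomial(2k-1,k-1) * Σ_{j=1}^{2k} (-δ_j) ]. -/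
/-!
Each factor of `f₁` is a linear form minus a constant, so `f₁` has degree `8k + 1` and its
part of degree `8k` is `∑ᵢ (-cᵢ) ∏_{j ≠ i} ℓⱼ`. With `Q = x² - y²`, the product of all the
linear forms is `x^(2k+1) y^(2k) Q^(2k)`; removing one form and reading off the coefficient of
`x^(4k) y^(4k)` by the binomial theorem gives `(-1)^k C(2k, k)` for a form `x`, `0` for `y`
(every term has an odd power of `x`), and `(-1)^k C(2k-1, k-1)` for `x ∓ y`.
-/

open MvPolynomial Finset

namespace MvPolynomial

variable {σ R : Type*}

theorem totalDegree_prod_le_card [CommSemiring R] {ι : Type*} (L : ι → MvPolynomial σ R)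
    {s : Finset ι} (hL : ∀ i ∈ s, (L i).totalDegree ≤ 1) :
    (∏ i ∈ s, L i).totalDegree ≤ s.card :=
  (totalDegree_finsetProd s L).trans <| by simpa using Finset.sum_le_sum hL

theorem coeff_mul_congr_of_totalDegree_le_one [CommSemiring R] {L P Q : MvPolynomial σ R} {n : ℕ}
    (hL : L.totalDegree ≤ 1) (hPQ : ∀ e : σ →₀ ℕ, n ≤ e.degree + 1 → coeff e P = coeff e Q)
    {d : σ →₀ ℕ} (hd : n ≤ d.degree) : coeff d (L * P) = coeff d (L * Q) := by
  classical
  rw [coeff_mul, coeff_mul]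
  refine Finset.sum_congr rfl fun p hp => ?_
  have hdeg : p.1.degree + p.2.degree = d.degree := by rw [← map_add, mem_antidiagonal.mp hp]
  by_cases hp1 : p.1.degree ≤ 1
  · rw [hPQ p.2 (by omega)]
  · rw [coeff_eq_zero_of_totalDegree_lt (show L.totalDegree < p.1.degree by omega),
      zero_mul, zero_mul]

theorem coeff_prod_sub_C [CommRing R] {ι : Type*} [DecidableEq ι] (L : ι → MvPolynomial σ R)
    (c : ι → R) {s : Finset ι} (hL : ∀ i ∈ s, (L i).totalDegree ≤ 1) {d : σ →₀ ℕ}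
    (hd : s.card ≤ d.degree + 1) :
    coeff d (∏ i ∈ s, (L i - C (c i)))
      = coeff d (∏ i ∈ s, L i - ∑ i ∈ s, C (c i) * ∏ j ∈ s.erase i, L j) := by
  induction s using Finset.induction_on generalizing d with
  | empty => simp
  | @insert a s ha ih =>
    have hLs : ∀ i ∈ s, (L i).totalDegree ≤ 1 := fun i hi => hL i (mem_insert_of_mem hi)
    rw [card_insert_of_notMem ha] at hd
    set E := ∑ i ∈ s, C (c i) * ∏ j ∈ s.erase i, L j
    have hE : coeff d E = 0 := by
      rw [coeff_sum]
      refine sum_eq_zero fun i hi => ?_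
      rw [coeff_C_mul, coeff_eq_zero_of_totalDegree_lt, mul_zero]
      have := totalDegree_prod_le_card L fun j (hj : j ∈ s.erase i) =>
        hLs j (mem_of_mem_erase hj)
      have := card_erase_add_one hi
      change _ < d.degree
      omega
    have hsum : ∑ i ∈ insert a s, C (c i) * ∏ j ∈ (insert a s).erase i, L j
        = C (c a) * ∏ j ∈ s, L j + L a * E := by
      rw [sum_insert ha, erase_insert ha, mul_sum]
      congr 1
      refine sum_congr rfl fun i hi => ?_
      rw [erase_insert_of_ne (ne_of_mem_of_not_mem hi ha).symm,
        prod_insert fun h => ha (mem_of_mem_erase h)]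
      ring
    rw [prod_insert ha, sub_mul, coeff_sub, coeff_C_mul,
      coeff_mul_congr_of_totalDegree_le_one (hL a (mem_insert_self a s)) (fun e he => ih hLs he)
        (by omega),
      ih hLs (by omega), prod_insert ha, hsum]
    simp only [mul_sub, coeff_sub, coeff_add, coeff_C_mul, hE]
    ring

section

variable [CommRing R]

theorem X_pow_mul_X_pow_mul_sq_sub_sq_pow (a b n : ℕ) :
    (X 0 ^ a * X 1 ^ b * (X 0 ^ 2 - X 1 ^ 2) ^ n : MvPolynomial (Fin 2) R)
      = ∑ m ∈ range (n + 1),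
          monomial (Finsupp.single 0 (a + 2 * m) + Finsupp.single 1 (b + 2 * (n - m)))
            ((-1) ^ (n - m) * n.choose m : R) := by
  rw [sub_eq_add_neg, add_pow, mul_sum]
  refine sum_congr rfl fun m _ => ?_
  rw [monomial_add_single, ← C_mul_X_pow_eq_monomial]
  simp only [map_mul, map_pow, map_neg, map_one, map_natCast]
  ring

theorem coeff_X_pow_mul_X_pow_mul_sq_sub_sq_pow {a b n m A B : ℕ} (hm : m ≤ n)
    (hA : a + 2 * m = A) (hB : b + 2 * (n - m) = B) :
    coeff (Finsupp.single 0 A + Finsupp.single 1 B)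
      (X 0 ^ a * X 1 ^ b * (X 0 ^ 2 - X 1 ^ 2) ^ n : MvPolynomial (Fin 2) R)
      = (-1) ^ (n - m) * n.choose m := by
  classical
  rw [X_pow_mul_X_pow_mul_sq_sub_sq_pow, coeff_sum, sum_eq_single m]
  · rw [coeff_monomial, if_pos (by rw [hA, hB])]
  · intro m' _ hm'
    rw [coeff_monomial, if_neg]
    intro h
    have h0 : a + 2 * m' = A := by simpa using DFunLike.congr_fun h 0
    omega
  · intro h
    exact absurd (mem_range.mpr (by omega)) h

theorem coeff_X_pow_mul_X_pow_mul_sq_sub_sq_pow_of_mod_two_ne {a b n A B : ℕ}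
    (h : A % 2 ≠ a % 2) :
    coeff (Finsupp.single 0 A + Finsupp.single 1 B)
      (X 0 ^ a * X 1 ^ b * (X 0 ^ 2 - X 1 ^ 2) ^ n : MvPolynomial (Fin 2) R) = 0 := by
  classical
  rw [X_pow_mul_X_pow_mul_sq_sub_sq_pow, coeff_sum]
  refine sum_eq_zero fun m _ => ?_
  rw [coeff_monomial, if_neg]
  intro h'
  have h0 : a + 2 * m = A := by simpa using DFunLike.congr_fun h' 0
  omega

end

end MvPolynomial

/-- `(j, t)` indexes the `t`-th linear factor of the `j`-th block of `f₁`; the lone factor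
`x - α₀` is `(0, 0)`. -/
def factorIndex (k : ℕ) : Finset (ℕ × Fin 4) :=
  insert (0, 0) (Icc 1 (2 * k) ×ˢ univ)

noncomputable def linearForm : Fin 4 → MvPolynomial (Fin 2) ℝ :=
  ![X 0, X 1, X 0 - X 1, X 0 + X 1]

noncomputable def cofactor (k : ℕ) : Fin 4 → MvPolynomial (Fin 2) ℝ :=
  ![X 0 ^ (2 * k) * X 1 ^ (2 * k) * (X 0 ^ 2 - X 1 ^ 2) ^ (2 * k),
    X 0 ^ (2 * k + 1) * X 1 ^ (2 * k - 1) * (X 0 ^ 2 - X 1 ^ 2) ^ (2 * k),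
    X 0 ^ (2 * k + 2) * X 1 ^ (2 * k) * (X 0 ^ 2 - X 1 ^ 2) ^ (2 * k - 1)
      + X 0 ^ (2 * k + 1) * X 1 ^ (2 * k + 1) * (X 0 ^ 2 - X 1 ^ 2) ^ (2 * k - 1),
    X 0 ^ (2 * k + 2) * X 1 ^ (2 * k) * (X 0 ^ 2 - X 1 ^ 2) ^ (2 * k - 1)
      - X 0 ^ (2 * k + 1) * X 1 ^ (2 * k + 1) * (X 0 ^ 2 - X 1 ^ 2) ^ (2 * k - 1)]

section

variable {k : ℕ}

@[to_additive]
theorem prod_factorIndex {M : Type*} [CommMonoid M] (g : ℕ × Fin 4 → M) :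
    ∏ i ∈ factorIndex k, g i
      = g (0, 0) * ∏ j ∈ Icc 1 (2 * k), (g (j, 0) * g (j, 1) * g (j, 2) * g (j, 3)) := by
  rw [factorIndex, prod_insert (by simp), prod_product]
  simp only [Fin.prod_univ_four]

theorem card_factorIndex : (factorIndex k).card = 8 * k + 1 := by
  rw [factorIndex, card_insert_of_notMem (by simp), card_product, Nat.card_Icc, card_univ,
    Fintype.card_fin]
  omega

theorem totalDegree_linearForm_le (t : Fin 4) : (linearForm t).totalDegree ≤ 1 := by
  fin_cases t
  · exact (totalDegree_X 0).le
  · exact (totalDegree_X 1).le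
  · exact (totalDegree_sub _ _).trans (by simp [totalDegree_X])
  · exact (totalDegree_add _ _).trans (by simp [totalDegree_X])

theorem linearForm_ne_zero (t : Fin 4) : linearForm t ≠ 0 := by
  fin_cases t
  · exact X_ne_zero 0
  · exact X_ne_zero 1
  all_goals
    intro h
    simpa [linearForm, coeff_X, Finsupp.single_eq_single_iff] using
      congr_arg (coeff (Finsupp.single 0 1)) h

theorem prod_linearForm_factorIndex :
    ∏ i ∈ factorIndex k, linearForm i.2
      = X 0 ^ (2 * k + 1) * X 1 ^ (2 * k) * (X 0 ^ 2 - X 1 ^ 2) ^ (2 * k) := by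
  simp only [linearForm, Fin.isValue, prod_factorIndex, Matrix.cons_val_zero, Matrix.cons_val_one,
    Matrix.cons_val, prod_const, Nat.card_Icc, add_tsub_cancel_right]
  rw [show (X 0 * X 1 * (X 0 - X 1) * (X 0 + X 1) : MvPolynomial (Fin 2) ℝ)
    = X 0 * X 1 * (X 0 ^ 2 - X 1 ^ 2) by ring, mul_pow, mul_pow]
  ring

theorem linearForm_mul_cofactor (hk : 1 ≤ k) (t : Fin 4) :
    linearForm t * cofactor k t
      = X 0 ^ (2 * k + 1) * X 1 ^ (2 * k) * (X 0 ^ 2 - X 1 ^ 2) ^ (2 * k) := by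
  obtain ⟨n, rfl⟩ : ∃ n, k = n + 1 := ⟨k - 1, by omega⟩
  fin_cases t <;>
    simp only [linearForm, cofactor, Fin.isValue, Fin.zero_eta, Fin.mk_one, Fin.reduceFinMk,
      Matrix.cons_val_zero, Matrix.cons_val_one, Matrix.cons_val,
      show 2 * (n + 1) - 1 = 2 * n + 1 by omega] <;>
    ring

theorem prod_erase_factorIndex (hk : 1 ≤ k) {i : ℕ × Fin 4} (hi : i ∈ factorIndex k) :
    ∏ j ∈ (factorIndex k).erase i, linearForm j.2 = cofactor k i.2 :=
  mul_left_cancel₀ (linearForm_ne_zero i.2) <| by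
    rw [mul_prod_erase _ (fun j => linearForm j.2) hi, prod_linearForm_factorIndex,
      linearForm_mul_cofactor hk]

theorem coeff_cofactor (hk : 1 ≤ k) (t : Fin 4) :
    coeff (Finsupp.single 0 (4 * k) + Finsupp.single 1 (4 * k)) (cofactor k t)
      = (-1) ^ k * ![((2 * k).choose k : ℝ), 0, ((2 * k - 1).choose (k - 1) : ℝ),
          ((2 * k - 1).choose (k - 1) : ℝ)] t := by
  fin_cases t <;>
    dsimp only [cofactor, Fin.isValue, Fin.zero_eta, Fin.mk_one, Fin.reduceFinMk,
      Matrix.cons_val_zero, Matrix.cons_val_one, Matrix.cons_val]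
  · rw [coeff_X_pow_mul_X_pow_mul_sq_sub_sq_pow (m := k) (by omega) (by omega) (by omega)]
    simp [show 2 * k - k = k by omega]
  · rw [coeff_X_pow_mul_X_pow_mul_sq_sub_sq_pow_of_mod_two_ne (by omega)]
    simp
  · rw [coeff_add,
      coeff_X_pow_mul_X_pow_mul_sq_sub_sq_pow (m := k - 1) (by omega) (by omega) (by omega),
      coeff_X_pow_mul_X_pow_mul_sq_sub_sq_pow_of_mod_two_ne (by omega)]
    simp [show 2 * k - 1 - (k - 1) = k by omega]
  · rw [coeff_sub,
      coeff_X_pow_mul_X_pow_mul_sq_sub_sq_pow (m := k - 1) (by omega) (by omega) (by omega),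
      coeff_X_pow_mul_X_pow_mul_sq_sub_sq_pow_of_mod_two_ne (by omega)]
    simp [show 2 * k - 1 - (k - 1) = k by omega]

end

theorem stmt_3 (k : ℕ) (hk : 1 ≤ k) (α β γ δ : ℕ → ℝ) :
    MvPolynomial.coeff (Finsupp.single 0 (4 * k) + Finsupp.single 1 (4 * k))
      ((X 0 - C (α 0)) *
       ∏ j ∈ Finset.Icc 1 (2 * k),
         (X 0 - C (α j)) * (X 1 - C (β j)) * (X 0 - X 1 - C (γ j)) * (X 0 + X 1 - C (δ j)) :
        MvPolynomial (Fin 2) ℝ)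
      = (-1 : ℝ) ^ k *
        ((Nat.choose (2 * k) k : ℝ) * ∑ j ∈ Finset.Icc 0 (2 * k), (-(α j)) +
         (Nat.choose (2 * k - 1) (k - 1) : ℝ) * ∑ j ∈ Finset.Icc 1 (2 * k), (-(γ j)) +
         (Nat.choose (2 * k - 1) (k - 1) : ℝ) * ∑ j ∈ Finset.Icc 1 (2 * k), (-(δ j))) := by
  set c : ℕ × Fin 4 → ℝ := fun i => ![α, β, γ, δ] i.2 i.1
  have hf : (X 0 - C (α 0)) * ∏ j ∈ Icc 1 (2 * k),
      (X 0 - C (α j)) * (X 1 - C (β j)) * (X 0 - X 1 - C (γ j)) * (X 0 + X 1 - C (δ j))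
      = ∏ i ∈ factorIndex k, (linearForm i.2 - C (c i)) := by
    rw [prod_factorIndex]
    rfl
  have hdeg : (factorIndex k).card
      ≤ (Finsupp.single 0 (4 * k) + Finsupp.single (1 : Fin 2) (4 * k)).degree + 1 := by
    rw [card_factorIndex, map_add, Finsupp.degree_single, Finsupp.degree_single]
    omega
  rw [hf, coeff_prod_sub_C _ _ (fun i _ => totalDegree_linearForm_le i.2) hdeg]
  simp only [coeff_sub, coeff_sum, coeff_C_mul]
  rw [prod_linearForm_factorIndex, coeff_X_pow_mul_X_pow_mul_sq_sub_sq_pow_of_mod_two_ne (by omega),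
    sum_congr rfl fun i hi => by rw [prod_erase_factorIndex hk hi, coeff_cofactor hk],
    sum_factorIndex]
  rw [← insert_Icc_succ_left_eq_Icc (Nat.zero_le (2 * k)), sum_insert (by simp)]
  simp only [c, Fin.isValue, Matrix.cons_val_zero, Matrix.cons_val_one, Matrix.cons_val, mul_zero,
    add_zero, sum_add_distrib, ← sum_mul, sum_neg_distrib, Order.succ_eq_add_one, zero_add]
  ring
end

section
/- The coefficient of x^{4k} y^{4k} in f_4(x,y) = (x+y-δ_0) ∏_{j=1}^{2k} (x-α_j)(y-β_j)(x-y-γ_j)(x+y-δ_j) equals (-1)^k binomial(2k,k) [ Σ_{j=1}^{2k} (-α_j) + Σ_{j=1}^{2k} (-β_j) + Σ_{j=0}^{2k} (-δ_j) ]. -/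
open MvPolynomial Finset

private lemma single_add_single_inj {u v a b : ℕ}
    (h : Finsupp.single (0 : Fin 2) u + Finsupp.single 1 v
       = Finsupp.single 0 a + Finsupp.single 1 b) : u = a ∧ v = b := by
  have h0 := DFunLike.congr_fun h 0
  have h1 := DFunLike.congr_fun h 1
  simp [Finsupp.single_apply] at h0 h1
  exact ⟨h0, h1⟩

private lemma coeff_core (e f q a b : ℕ) :
    MvPolynomial.coeff (Finsupp.single 0 a + Finsupp.single 1 b)
      ((X 0)^e * (X 1)^f * ((X 0)^2 - (X 1)^2)^q : MvPolynomial (Fin 2) ℝ)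
    = ∑ i ∈ Finset.range (q+1),
        (if a = e + 2*i ∧ b = f + 2*(q-i) then ((-1:ℝ))^(q-i) * (q.choose i) else 0) := by
  rw [sub_pow, Finset.mul_sum, coeff_sum]
  refine Finset.sum_congr rfl fun i hi => ?_
  have hiq : i ≤ q := by simp at hi; omega
  have hsign : ((-1:ℝ))^(i+q) = ((-1:ℝ))^(q-i) := by
    rw [show i + q = (q-i) + 2*i by omega, pow_add, pow_mul]; norm_num
  have h1 : (X 0)^e * (X 1)^f *
      ((-1 : MvPolynomial (Fin 2) ℝ)^(i+q) * ((X 0)^2)^i * ((X 1)^2)^(q-i) * (q.choose i : MvPolynomial (Fin 2) ℝ))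
      = C (((-1:ℝ))^(q-i) * (q.choose i)) * (X 0)^(e+2*i) * (X 1)^(f+2*(q-i)) := by
    have : ((q.choose i : ℕ) : MvPolynomial (Fin 2) ℝ) = C ((q.choose i : ℕ) : ℝ) := by
      simp
    rw [this, show ((-1 : MvPolynomial (Fin 2) ℝ)) = C (-1) by simp, ← C_pow, ← hsign]
    rw [pow_add, pow_add, ← pow_mul, ← pow_mul]
    simp only [map_mul]
    ring
  rw [h1, X_pow_eq_monomial, X_pow_eq_monomial, mul_assoc, monomial_mul, one_mul,
    coeff_C_mul, coeff_monomial]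
  by_cases hc : a = e + 2*i ∧ b = f + 2*(q-i)
  · rw [if_pos hc, if_pos (by rw [hc.1, hc.2]), mul_one]
  · rw [if_neg hc, if_neg (fun h => hc (by
      obtain ⟨h1', h2'⟩ := single_add_single_inj h; exact ⟨h1'.symm, h2'.symm⟩)), mul_zero]

private lemma coeff_eval (e f q a b i0 : ℕ) (h1 : i0 ≤ q) (h2 : a = e + 2*i0)
    (h3 : b = f + 2*(q-i0)) :
    MvPolynomial.coeff (Finsupp.single 0 a + Finsupp.single 1 b)
      ((X 0)^e * (X 1)^f * ((X 0)^2 - (X 1)^2)^q : MvPolynomial (Fin 2) ℝ)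
    = ((-1:ℝ))^(q-i0) * (q.choose i0) := by
  rw [coeff_core, Finset.sum_eq_single i0]
  · rw [if_pos ⟨h2, h3⟩]
  · intro i hi hne
    rw [if_neg]
    rintro ⟨ha, hb⟩
    simp at hi
    omega
  · intro h; simp at h; omega

private lemma coeff_zero' (e f q a b : ℕ)
    (h : ∀ i : ℕ, ¬(a = e + 2*i ∧ b = f + 2*(q-i))) :
    MvPolynomial.coeff (Finsupp.single 0 a + Finsupp.single 1 b)
      ((X 0)^e * (X 1)^f * ((X 0)^2 - (X 1)^2)^q : MvPolynomial (Fin 2) ℝ) = 0 := by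
  rw [coeff_core]
  exact Finset.sum_eq_zero fun i _ => if_neg (h i)

/- degree helpers -/
private lemma deg_mul_le {p q : MvPolynomial (Fin 2) ℝ} {a b : ℕ}
    (hp : p.totalDegree ≤ a) (hq : q.totalDegree ≤ b) : (p*q).totalDegree ≤ a + b :=
  le_trans (totalDegree_mul _ _) (add_le_add hp hq)

private lemma deg_add_le {p q : MvPolynomial (Fin 2) ℝ} {a : ℕ}
    (hp : p.totalDegree ≤ a) (hq : q.totalDegree ≤ a) : (p+q).totalDegree ≤ a :=
  le_trans (totalDegree_add _ _) (max_le hp hq)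

private lemma deg_sub_le {p q : MvPolynomial (Fin 2) ℝ} {a : ℕ}
    (hp : p.totalDegree ≤ a) (hq : q.totalDegree ≤ a) : (p-q).totalDegree ≤ a := by
  rw [sub_eq_add_neg]
  exact deg_add_le hp (by rwa [totalDegree_neg])

private lemma deg_X_le (i : Fin 2) : (X i : MvPolynomial (Fin 2) ℝ).totalDegree ≤ 1 :=
  le_of_eq (totalDegree_X i)

private lemma deg_X_pow_le (i : Fin 2) (m : ℕ) :
    ((X i)^m : MvPolynomial (Fin 2) ℝ).totalDegree ≤ m :=
  le_trans (totalDegree_pow _ _) (by simp [totalDegree_X])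

private lemma deg_C_le (c : ℝ) : (C c : MvPolynomial (Fin 2) ℝ).totalDegree ≤ 0 :=
  le_of_eq (totalDegree_C c)

private lemma deg_CXX_le (c : ℝ) (i j D : ℕ) (h : i + j ≤ D) :
    (C c * (X 0)^i * (X 1)^j : MvPolynomial (Fin 2) ℝ).totalDegree ≤ D :=
  le_trans (deg_mul_le (deg_mul_le (deg_C_le c) (deg_X_pow_le 0 i)) (deg_X_pow_le 1 j))
    (by omega)

private lemma deg_v_le : ((X 0)^2 - (X 1)^2 : MvPolynomial (Fin 2) ℝ).totalDegree ≤ 2 :=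
  deg_sub_le (deg_X_pow_le 0 2) (deg_X_pow_le 1 2)

private lemma deg_v_pow_le (m : ℕ) :
    (((X 0)^2 - (X 1)^2 : MvPolynomial (Fin 2) ℝ)^m).totalDegree ≤ 2*m := by
  refine le_trans (totalDegree_pow _ _) ?_
  calc m * ((X 0)^2 - (X 1)^2 : MvPolynomial (Fin 2) ℝ).totalDegree ≤ m * 2 :=
        Nat.mul_le_mul_left m deg_v_le
    _ = 2*m := by ring

/-- The explicit degree-≤2 remainder. -/
private noncomputable def Wp (a b c d : ℝ) : MvPolynomial (Fin 2) ℝ :=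
    C (a*b*c*d) * (X 0)^0 * (X 1)^0
  + C (a*b*d - a*c*d - a*b*c) * (X 0)^0 * (X 1)^1
  + C (a*c - a*d - a*b) * (X 0)^0 * (X 1)^2
  + C (-(b*c*d) - a*b*d - a*b*c) * (X 0)^1 * (X 1)^0
  + C (c*d - b*d + b*c + a*d + a*c) * (X 0)^1 * (X 1)^1
  + C (b*d + b*c + a*b) * (X 0)^2 * (X 1)^0

private lemma Wp_deg (a b c d : ℝ) : (Wp a b c d).totalDegree ≤ 2 := by
  unfold Wp
  refine deg_add_le (deg_add_le (deg_add_le (deg_add_le (deg_add_le ?_ ?_) ?_) ?_) ?_) ?_ <;>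
    exact deg_CXX_le _ _ _ _ (by omega)

private lemma hW (a b c d : ℝ) :
    (X 0 - C a) * (X 1 - C b) * (X 0 - X 1 - C c) * (X 0 + X 1 - C d)
      - X 0 * X 1 * (X 0 - X 1) * (X 0 + X 1)
    = (- (C a * (X 1 * ((X 0)^2 - (X 1)^2))) - C b * (X 0 * ((X 0)^2 - (X 1)^2))
       - C c * (X 0 * X 1 * (X 0 + X 1)) - C d * (X 0 * X 1 * (X 0 - X 1)))
      + Wp a b c d := by
  unfold Wp
  simp only [map_mul, map_add, map_sub, map_neg]
  ring

private lemma R_deg (a b c d : ℝ) :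
    ((X 0 - C a) * (X 1 - C b) * (X 0 - X 1 - C c) * (X 0 + X 1 - C d)
      - X 0 * X 1 * (X 0 - X 1) * (X 0 + X 1) : MvPolynomial (Fin 2) ℝ).totalDegree ≤ 3 := by
  rw [hW]
  refine deg_add_le ?_ (le_trans (Wp_deg a b c d) (by omega))
  have hxy1 : (X 0 + X 1 : MvPolynomial (Fin 2) ℝ).totalDegree ≤ 1 :=
    deg_add_le (deg_X_le 0) (deg_X_le 1)
  have hxy1' : (X 0 - X 1 : MvPolynomial (Fin 2) ℝ).totalDegree ≤ 1 :=
    deg_sub_le (deg_X_le 0) (deg_X_le 1)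
  refine deg_sub_le (deg_sub_le (deg_sub_le ?_ ?_) ?_) ?_
  · rw [neg_eq_neg_one_mul]
    refine deg_mul_le (a := 0) (b := 3) ?_ ?_
    · rw [show ((-1 : MvPolynomial (Fin 2) ℝ)) = C (-1) by simp]; exact deg_C_le _
    · exact deg_mul_le (a := 0) (deg_C_le a)
        (deg_mul_le (a := 1) (deg_X_le 1) deg_v_le)
  · exact deg_mul_le (a := 0) (deg_C_le b) (deg_mul_le (a := 1) (deg_X_le 0) deg_v_le)
  · exact deg_mul_le (a := 0) (deg_C_le c)
      (deg_mul_le (deg_mul_le (deg_X_le 0) (deg_X_le 1)) hxy1)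
  · exact deg_mul_le (a := 0) (deg_C_le d)
      (deg_mul_le (deg_mul_le (deg_X_le 0) (deg_X_le 1)) hxy1')

private lemma H_deg : (X 0 * X 1 * (X 0 - X 1) * (X 0 + X 1) :
    MvPolynomial (Fin 2) ℝ).totalDegree ≤ 4 :=
  deg_mul_le (deg_mul_le (deg_mul_le (deg_X_le 0) (deg_X_le 1))
    (deg_sub_le (deg_X_le 0) (deg_X_le 1))) (deg_add_le (deg_X_le 0) (deg_X_le 1))

private lemma Hpow (m : ℕ) :
    ((X 0 * X 1 * (X 0 - X 1) * (X 0 + X 1) : MvPolynomial (Fin 2) ℝ))^m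
    = (X 0)^m * (X 1)^m * ((X 0)^2 - (X 1)^2)^m := by
  rw [show (X 0 * X 1 * (X 0 - X 1) * (X 0 + X 1) : MvPolynomial (Fin 2) ℝ)
      = X 0 * X 1 * ((X 0)^2 - (X 1)^2) by ring, mul_pow, mul_pow]

private lemma supsum (a b : ℕ) (ha : 0 < a) (hb : 0 < b) :
    ∑ i ∈ ((Finsupp.single (0:Fin 2) a + Finsupp.single 1 b : Fin 2 →₀ ℕ)).support,
      ((Finsupp.single (0:Fin 2) a + Finsupp.single 1 b : Fin 2 →₀ ℕ)) i = a + b := by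
  rw [Finset.sum_subset (Finset.subset_univ _)
    (fun i _ hi => Finsupp.notMem_support_iff.mp hi)]
  rw [Fin.sum_univ_two]
  simp [Finsupp.single_apply]

private lemma decomp (QQ : ℕ → MvPolynomial (Fin 2) ℝ) (H : MvPolynomial (Fin 2) ℝ)
    (hH : H.totalDegree ≤ 4) (hR : ∀ j, (QQ j - H).totalDegree ≤ 3) (s : Finset ℕ) :
    ∃ E : MvPolynomial (Fin 2) ℝ,
      (∏ j ∈ s, QQ j) = H ^ s.card + (∑ j ∈ s, H ^ (s.card - 1) * (QQ j - H)) + E ∧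
      E.totalDegree ≤ 4 * s.card - 2 := by
  induction s using Finset.induction_on with
  | empty => exact ⟨0, by simp, by simp⟩
  | @insert a s ha ih =>
    obtain ⟨E, hEq, hdeg⟩ := ih
    by_cases hs : s = ∅
    · subst hs
      refine ⟨0, ?_, by simp⟩
      have h1 : (insert a (∅:Finset ℕ)) = {a} := rfl
      rw [h1, Finset.prod_singleton, Finset.sum_singleton, Finset.card_singleton]
      ring
    · have hpos : 1 ≤ s.card := Nat.one_le_iff_ne_zero.mpr (by simpa [Finset.card_eq_zero] using hs)
      refine ⟨H * E + (QQ a - H) * (∑ j ∈ s, H ^ (s.card - 1) * (QQ j - H)) + (QQ a - H) * E,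
        ?_, ?_⟩
      · rw [Finset.prod_insert ha, hEq, Finset.sum_insert ha,
          Finset.card_insert_of_notMem ha]
        have h1 : s.card + 1 - 1 = s.card := by omega
        rw [h1]
        have hS : (∑ j ∈ s, H ^ s.card * (QQ j - H))
            = H * ∑ j ∈ s, H ^ (s.card - 1) * (QQ j - H) := by
          rw [Finset.mul_sum]
          refine Finset.sum_congr rfl fun j _ => ?_
          have h2 : H ^ s.card = H * H ^ (s.card - 1) := by
            rw [← pow_succ']
            congr 1
            omega
          rw [h2]
          ring
        rw [hS, show s.card + 1 = (s.card) + 1 by rfl]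
        have hHp : H ^ (s.card + 1) = H * H ^ s.card := by rw [pow_succ]; ring
        rw [hHp]
        ring
      · rw [Finset.card_insert_of_notMem ha]
        refine deg_add_le (deg_add_le ?_ ?_) ?_
        · exact le_trans (deg_mul_le hH hdeg) (by omega)
        · refine le_trans (deg_mul_le (hR a)
            (le_trans (totalDegree_finset_sum _ _) (Finset.sup_le fun j _ =>
              deg_mul_le (le_trans (totalDegree_pow _ _)
                (le_trans (Nat.mul_le_mul_left _ hH) (le_refl _))) (hR j)))) ?_
          omega
        · exact le_trans (deg_mul_le (hR a) hdeg) (by omega)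

set_option maxHeartbeats 1000000 in
private lemma perj (k n : ℕ) (hn : 2*k = n+1) (a b c d : ℝ) :
    MvPolynomial.coeff (Finsupp.single 0 (2*n+2) + Finsupp.single 1 (2*n+2))
      ((X 0 + X 1) * ((X 0 * X 1 * (X 0 - X 1) * (X 0 + X 1))^n *
        ((X 0 - C a) * (X 1 - C b) * (X 0 - X 1 - C c) * (X 0 + X 1 - C d)
          - X 0 * X 1 * (X 0 - X 1) * (X 0 + X 1))) : MvPolynomial (Fin 2) ℝ)
    = (-1:ℝ)^k * (((n+1).choose k : ℕ) : ℝ) * (-a - b - d) := by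
  have key : (X 0 + X 1) * ((X 0 * X 1 * (X 0 - X 1) * (X 0 + X 1))^n *
        ((X 0 - C a) * (X 1 - C b) * (X 0 - X 1 - C c) * (X 0 + X 1 - C d)
          - X 0 * X 1 * (X 0 - X 1) * (X 0 + X 1)))
      = C a * (-((X 0)^(n+1) * (X 1)^(n+1) * ((X 0)^2 - (X 1)^2)^(n+1))
               - (X 0)^n * (X 1)^(n+2) * ((X 0)^2 - (X 1)^2)^(n+1))
      + C b * (-((X 0)^(n+2) * (X 1)^n * ((X 0)^2 - (X 1)^2)^(n+1))
               - (X 0)^(n+1) * (X 1)^(n+1) * ((X 0)^2 - (X 1)^2)^(n+1))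
      + C c * (-((X 0)^(n+3) * (X 1)^(n+1) * ((X 0)^2 - (X 1)^2)^n)
               - ((X 0)^(n+2) * (X 1)^(n+2) * ((X 0)^2 - (X 1)^2)^n
                  + (X 0)^(n+2) * (X 1)^(n+2) * ((X 0)^2 - (X 1)^2)^n)
               - (X 0)^(n+1) * (X 1)^(n+3) * ((X 0)^2 - (X 1)^2)^n)
      + C d * (-((X 0)^(n+1) * (X 1)^(n+1) * ((X 0)^2 - (X 1)^2)^(n+1)))
      + (X 0 + X 1) * ((X 0)^n * (X 1)^n * ((X 0)^2 - (X 1)^2)^n * Wp a b c d) := by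
    rw [hW, Hpow]
    ring
  rw [key]
  have e1 : MvPolynomial.coeff (Finsupp.single 0 (2*n+2) + Finsupp.single 1 (2*n+2))
      ((X 0)^(n+1) * (X 1)^(n+1) * ((X 0)^2 - (X 1)^2)^(n+1) : MvPolynomial (Fin 2) ℝ)
      = (-1:ℝ)^k * (((n+1).choose k : ℕ) : ℝ) := by
    rw [coeff_eval (n+1) (n+1) (n+1) (2*n+2) (2*n+2) k (by omega) (by omega) (by omega),
      show n+1-k = k by omega]
  have e2 : MvPolynomial.coeff (Finsupp.single 0 (2*n+2) + Finsupp.single 1 (2*n+2))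
      ((X 0)^n * (X 1)^(n+2) * ((X 0)^2 - (X 1)^2)^(n+1) : MvPolynomial (Fin 2) ℝ) = 0 :=
    coeff_zero' _ _ _ _ _ (fun i => by omega)
  have e3 : MvPolynomial.coeff (Finsupp.single 0 (2*n+2) + Finsupp.single 1 (2*n+2))
      ((X 0)^(n+2) * (X 1)^n * ((X 0)^2 - (X 1)^2)^(n+1) : MvPolynomial (Fin 2) ℝ) = 0 :=
    coeff_zero' _ _ _ _ _ (fun i => by omega)
  have e4 : MvPolynomial.coeff (Finsupp.single 0 (2*n+2) + Finsupp.single 1 (2*n+2))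
      ((X 0)^(n+3) * (X 1)^(n+1) * ((X 0)^2 - (X 1)^2)^n : MvPolynomial (Fin 2) ℝ)
      = (-1:ℝ)^k * ((n.choose (k-1) : ℕ) : ℝ) := by
    rw [coeff_eval (n+3) (n+1) n (2*n+2) (2*n+2) (k-1) (by omega) (by omega) (by omega),
      show n-(k-1) = k by omega]
  have e5 : MvPolynomial.coeff (Finsupp.single 0 (2*n+2) + Finsupp.single 1 (2*n+2))
      ((X 0)^(n+2) * (X 1)^(n+2) * ((X 0)^2 - (X 1)^2)^n : MvPolynomial (Fin 2) ℝ) = 0 :=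
    coeff_zero' _ _ _ _ _ (fun i => by omega)
  have e6 : MvPolynomial.coeff (Finsupp.single 0 (2*n+2) + Finsupp.single 1 (2*n+2))
      ((X 0)^(n+1) * (X 1)^(n+3) * ((X 0)^2 - (X 1)^2)^n : MvPolynomial (Fin 2) ℝ)
      = (-1:ℝ)^(k-1) * ((n.choose k : ℕ) : ℝ) := by
    rw [coeff_eval (n+1) (n+3) n (2*n+2) (2*n+2) k (by omega) (by omega) (by omega),
      show n-k = k-1 by omega]
  have eW : MvPolynomial.coeff (Finsupp.single 0 (2*n+2) + Finsupp.single 1 (2*n+2))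
      ((X 0 + X 1) * ((X 0)^n * (X 1)^n * ((X 0)^2 - (X 1)^2)^n * Wp a b c d)
        : MvPolynomial (Fin 2) ℝ) = 0 := by
    refine coeff_eq_zero_of_totalDegree_lt ?_
    rw [supsum _ _ (by omega) (by omega)]
    refine lt_of_le_of_lt (deg_mul_le (a := 1) (b := n+n+2*n+2)
      (deg_add_le (deg_X_le 0) (deg_X_le 1))
      (deg_mul_le (a := n+n+2*n) (deg_mul_le (deg_mul_le (deg_X_pow_le 0 n) (deg_X_pow_le 1 n))
        (deg_v_pow_le n)) (Wp_deg a b c d))) ?_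
    omega
  simp only [coeff_add, coeff_sub, coeff_neg, coeff_C_mul]
  rw [e1, e2, e3, e4, e5, e6, eW]
  have hcc : (n.choose (k-1) : ℝ) = (n.choose k : ℝ) := by
    norm_cast
    rw [show k-1 = n-k by omega]
    exact Nat.choose_symm (by omega)
  have hsgn : (-1:ℝ)^k = -(-1:ℝ)^(k-1) := by
    conv_lhs => rw [show k = (k-1)+1 by omega]
    rw [pow_succ]
    ring
  rw [hcc, hsgn]
  ring


private lemma coeffHnR (n : ℕ) (a b c d : ℝ) :
    MvPolynomial.coeff (Finsupp.single 0 (2*n+2) + Finsupp.single 1 (2*n+2))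
      ((X 0 * X 1 * (X 0 - X 1) * (X 0 + X 1))^n *
        ((X 0 - C a) * (X 1 - C b) * (X 0 - X 1 - C c) * (X 0 + X 1 - C d)
          - X 0 * X 1 * (X 0 - X 1) * (X 0 + X 1)) : MvPolynomial (Fin 2) ℝ) = 0 := by
  refine coeff_eq_zero_of_totalDegree_lt ?_
  rw [supsum _ _ (by omega) (by omega)]
  refine lt_of_le_of_lt (deg_mul_le (a := 4*n) (b := 3)
    (le_trans (totalDegree_pow _ _)
      (le_trans (Nat.mul_le_mul_left n H_deg) (by omega)))
    (R_deg a b c d)) (by omega)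

private lemma coeffH (k n : ℕ) (hn : 2*k = n+1) :
    MvPolynomial.coeff (Finsupp.single 0 (2*n+2) + Finsupp.single 1 (2*n+2))
      (((X 0 * X 1 * (X 0 - X 1) * (X 0 + X 1))^(n+1)) : MvPolynomial (Fin 2) ℝ)
    = (-1:ℝ)^k * (((n+1).choose k : ℕ) : ℝ) := by
  rw [Hpow, coeff_eval (n+1) (n+1) (n+1) (2*n+2) (2*n+2) k (by omega) (by omega) (by omega),
    show n+1-k = k by omega]

private lemma coeffXH (n : ℕ) :
    MvPolynomial.coeff (Finsupp.single 0 (2*n+2) + Finsupp.single 1 (2*n+2))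
      ((X 0 + X 1) * (X 0 * X 1 * (X 0 - X 1) * (X 0 + X 1))^(n+1) : MvPolynomial (Fin 2) ℝ)
    = 0 := by
  have key : ((X 0 + X 1) * (X 0 * X 1 * (X 0 - X 1) * (X 0 + X 1))^(n+1)
      : MvPolynomial (Fin 2) ℝ)
      = (X 0)^(n+2) * (X 1)^(n+1) * ((X 0)^2 - (X 1)^2)^(n+1)
        + (X 0)^(n+1) * (X 1)^(n+2) * ((X 0)^2 - (X 1)^2)^(n+1) := by
    rw [Hpow]; ring
  rw [key, coeff_add, coeff_zero' _ _ _ _ _ (fun i => by omega),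
    coeff_zero' _ _ _ _ _ (fun i => by omega), add_zero]

set_option maxHeartbeats 1000000 in
theorem stmt_6 (k : ℕ) (hk : 1 ≤ k) (α β γ δ : ℕ → ℝ) :
    MvPolynomial.coeff (Finsupp.single 0 (4 * k) + Finsupp.single 1 (4 * k))
      ((X 0 + X 1 - C (δ 0)) *
       ∏ j ∈ Finset.Icc 1 (2 * k),
         (X 0 - C (α j)) * (X 1 - C (β j)) * (X 0 - X 1 - C (γ j)) * (X 0 + X 1 - C (δ j)) :
        MvPolynomial (Fin 2) ℝ)
      = (-1 : ℝ) ^ k * (Nat.choose (2 * k) k : ℝ) *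
        (∑ j ∈ Finset.Icc 1 (2 * k), (-(α j)) + ∑ j ∈ Finset.Icc 1 (2 * k), (-(β j)) +
         ∑ j ∈ Finset.Icc 0 (2 * k), (-(δ j))) := by
  obtain ⟨n, hn⟩ : ∃ n, 2 * k = n + 1 := ⟨2*k - 1, by omega⟩
  rw [show 4 * k = 2*n+2 by omega, hn]
  obtain ⟨E, hEq, hEdeg⟩ := decomp
    (fun j => (X 0 - C (α j)) * (X 1 - C (β j)) * (X 0 - X 1 - C (γ j)) * (X 0 + X 1 - C (δ j)))
    (X 0 * X 1 * (X 0 - X 1) * (X 0 + X 1)) H_deg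
    (fun j => R_deg (α j) (β j) (γ j) (δ j)) (Finset.Icc 1 (n+1))
  have hcard : (Finset.Icc 1 (n+1)).card = n + 1 := by
    rw [Nat.card_Icc]; omega
  rw [hcard, show n + 1 - 1 = n from rfl] at hEq
  rw [hEq]
  have hsplit : (X 0 + X 1 - C (δ 0)) *
      ((X 0 * X 1 * (X 0 - X 1) * (X 0 + X 1)) ^ (n+1)
       + (∑ j ∈ Finset.Icc 1 (n+1), (X 0 * X 1 * (X 0 - X 1) * (X 0 + X 1)) ^ n *
           ((X 0 - C (α j)) * (X 1 - C (β j)) * (X 0 - X 1 - C (γ j)) * (X 0 + X 1 - C (δ j))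
             - X 0 * X 1 * (X 0 - X 1) * (X 0 + X 1))) + E)
    = (X 0 + X 1) * (X 0 * X 1 * (X 0 - X 1) * (X 0 + X 1)) ^ (n+1)
      + (X 0 + X 1) * (∑ j ∈ Finset.Icc 1 (n+1), (X 0 * X 1 * (X 0 - X 1) * (X 0 + X 1)) ^ n *
           ((X 0 - C (α j)) * (X 1 - C (β j)) * (X 0 - X 1 - C (γ j)) * (X 0 + X 1 - C (δ j))
             - X 0 * X 1 * (X 0 - X 1) * (X 0 + X 1)))
      + (X 0 + X 1) * E
      - C (δ 0) * (X 0 * X 1 * (X 0 - X 1) * (X 0 + X 1)) ^ (n+1)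
      - C (δ 0) * (∑ j ∈ Finset.Icc 1 (n+1), (X 0 * X 1 * (X 0 - X 1) * (X 0 + X 1)) ^ n *
           ((X 0 - C (α j)) * (X 1 - C (β j)) * (X 0 - X 1 - C (γ j)) * (X 0 + X 1 - C (δ j))
             - X 0 * X 1 * (X 0 - X 1) * (X 0 + X 1)))
      - C (δ 0) * E := by
    ring
  rw [hsplit, Finset.mul_sum, Finset.mul_sum]
  simp only [coeff_add, coeff_sub, coeff_sum, coeff_C_mul]
  simp only [perj k n hn, coeffHnR n, coeffH k n hn, coeffXH n]
  have hE1 : MvPolynomial.coeff (Finsupp.single 0 (2*n+2) + Finsupp.single 1 (2*n+2))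
      ((X 0 + X 1) * E : MvPolynomial (Fin 2) ℝ) = 0 := by
    refine coeff_eq_zero_of_totalDegree_lt ?_
    rw [supsum _ _ (by omega) (by omega)]
    refine lt_of_le_of_lt (deg_mul_le (a := 1) (b := 4*(n+1)-2)
      (deg_add_le (deg_X_le 0) (deg_X_le 1)) (by rwa [hcard] at hEdeg)) (by omega)
  have hE2 : MvPolynomial.coeff (Finsupp.single 0 (2*n+2) + Finsupp.single 1 (2*n+2))
      (E : MvPolynomial (Fin 2) ℝ) = 0 := by
    refine coeff_eq_zero_of_totalDegree_lt ?_
    rw [supsum _ _ (by omega) (by omega)]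
    refine lt_of_le_of_lt (by rwa [hcard] at hEdeg : E.totalDegree ≤ 4*(n+1)-2) (by omega)
  rw [hE1, hE2]
  have hsum : ∑ j ∈ Finset.Icc 1 (n+1),
      (-1:ℝ)^k * (((n+1).choose k : ℕ) : ℝ) * (-(α j) - β j - δ j)
      = (-1:ℝ)^k * (((n+1).choose k : ℕ) : ℝ) *
        ((∑ j ∈ Finset.Icc 1 (n+1), -(α j)) + (∑ j ∈ Finset.Icc 1 (n+1), -(β j))
          + (∑ j ∈ Finset.Icc 1 (n+1), -(δ j))) := by
    rw [← Finset.sum_add_distrib, ← Finset.sum_add_distrib, Finset.mul_sum]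
    refine Finset.sum_congr rfl fun j _ => ?_
    ring
  have hIcc0 : ∑ j ∈ Finset.Icc 0 (n+1), (-(δ j))
      = -(δ 0) + ∑ j ∈ Finset.Icc 1 (n+1), (-(δ j)) := by
    rw [show Finset.Icc 0 (n+1) = insert 0 (Finset.Icc 1 (n+1)) from by ext i; simp; omega,
      Finset.sum_insert (by simp)]
  rw [hsum, hIcc0]
  simp only [mul_zero, Finset.sum_const_zero]
  ring
end

section
/- Combinatorial Nullstellensatz (non-vanishing form): Let F be a field and f ∈ F[x₁,…,xₙ] a polynomial of total degree t₁ + ⋯ + tₙ with tᵢ nonnegative integers. If the coefficient of ∏ xᵢ^{tᵢ} in f is nonzero and S₁,…,Sₙ ⊆ F are finite sets with |Sᵢ| > tᵢ, then there exist sᵢ ∈ Sᵢ with f(s₁,…,sₙ) ≠ 0. -/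
section Aux
open Polynomial Finset

lemma cn_coeff_basis {F : Type*} [Field F] [DecidableEq F] (T : Finset F) {x : F} (hx : x ∈ T) :
    (Lagrange.basis T id x).coeff (T.card - 1) = Lagrange.nodalWeight T id x := by
  have hb : Lagrange.basis T id x
      = Polynomial.C (Lagrange.nodalWeight T id x) * Lagrange.nodal (T.erase x) id := by
    rw [Lagrange.basis_eq_prod_sub_inv_mul_nodal_div hx,
      ← Lagrange.nodal_erase_eq_nodal_div hx]
  have hcard : (T.erase x).card = T.card - 1 := Finset.card_erase_of_mem hx
  rw [hb, Polynomial.coeff_C_mul, ← hcard]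
  have hm : (Lagrange.nodal (T.erase x) id).Monic := Lagrange.nodal_monic
  have hd : (Lagrange.nodal (T.erase x) id).natDegree = (T.erase x).card :=
    Lagrange.natDegree_nodal
  rw [← hd, hm.coeff_natDegree, mul_one]

lemma cn_moment {F : Type*} [Field F] [DecidableEq F] (T : Finset F) (a : ℕ) (ha : a < T.card) :
    ∑ x ∈ T, x ^ a * Lagrange.nodalWeight T id x
      = if a + 1 = T.card then 1 else 0 := by
  have hinj : Set.InjOn (id : F → F) T := fun x _ y _ h => h
  have hdeg : ((Polynomial.X : F[X]) ^ a).degree < T.card := by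
    rw [Polynomial.degree_X_pow]
    exact_mod_cast ha
  have h := Lagrange.eq_interpolate hinj hdeg
  have hc := congrArg (fun p => p.coeff (T.card - 1)) h
  simp only [Lagrange.interpolate_apply, Polynomial.finset_sum_coeff, Polynomial.coeff_C_mul,
    Polynomial.eval_pow, Polynomial.eval_X, id_eq, Polynomial.coeff_X_pow] at hc
  rw [Finset.sum_congr rfl (fun x hx => by rw [cn_coeff_basis T hx])] at hc
  rw [← hc]
  by_cases h' : a + 1 = T.card
  · rw [if_pos h', if_pos (by omega)]
  · rw [if_neg h', if_neg (by omega)]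

end Aux

open MvPolynomial

theorem stmt_10 (F : Type*) [Field F] (n : ℕ) (f : MvPolynomial (Fin n) F)
    (t : Fin n → ℕ)
    (hdeg : f.totalDegree = ∑ i, t i)
    (hcoeff : MvPolynomial.coeff (Finsupp.equivFunOnFinite.symm t) f ≠ 0)
    (S : Fin n → Finset F) (hS : ∀ i, t i < (S i).card) :
    ∃ s : Fin n → F, (∀ i, s i ∈ S i) ∧ MvPolynomial.eval s f ≠ 0 := by
  classical
  by_contra hcon
  push_neg at hcon
  have hT : ∀ i, ∃ T ⊆ S i, T.card = t i + 1 :=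
    fun i => Finset.exists_subset_card_eq (hS i)
  choose T hTsub hTcard using hT
  have key : ∑ s ∈ Fintype.piFinset T,
      MvPolynomial.eval s f * ∏ i, Lagrange.nodalWeight (T i) id (s i)
      = MvPolynomial.coeff (Finsupp.equivFunOnFinite.symm t) f := by
    calc ∑ s ∈ Fintype.piFinset T,
        MvPolynomial.eval s f * ∏ i, Lagrange.nodalWeight (T i) id (s i)
        = ∑ s ∈ Fintype.piFinset T, ∑ m ∈ f.support,
            MvPolynomial.coeff m f * ∏ i, (s i) ^ (m i) * Lagrange.nodalWeight (T i) id (s i) := by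
          refine Finset.sum_congr rfl fun s _ => ?_
          rw [MvPolynomial.eval_eq', Finset.sum_mul]
          refine Finset.sum_congr rfl fun m _ => ?_
          rw [mul_assoc, ← Finset.prod_mul_distrib]
      _ = ∑ m ∈ f.support, MvPolynomial.coeff m f *
            ∏ i, ∑ x ∈ T i, x ^ (m i) * Lagrange.nodalWeight (T i) id x := by
          rw [Finset.sum_comm]
          refine Finset.sum_congr rfl fun m _ => ?_
          rw [← Finset.mul_sum, Finset.prod_univ_sum]
      _ = MvPolynomial.coeff (Finsupp.equivFunOnFinite.symm t) f := by
          rw [Finset.sum_eq_single (Finsupp.equivFunOnFinite.symm t)]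
          · have h1 : ∀ i : Fin n, ∑ x ∈ T i,
                x ^ ((Finsupp.equivFunOnFinite.symm t) i)
                  * Lagrange.nodalWeight (T i) id x = 1 := by
              intro i
              show ∑ x ∈ T i, x ^ (t i) * Lagrange.nodalWeight (T i) id x = 1
              rw [cn_moment (T i) (t i) (by rw [hTcard i]; omega),
                if_pos (hTcard i).symm]
            rw [Finset.prod_eq_one fun i _ => h1 i, mul_one]
          · intro m hm hne
            have hsum : ∑ i, m i ≤ ∑ i, t i := by
              have h1 := MvPolynomial.le_totalDegree hm
              rw [hdeg] at h1
              calc ∑ i, m i = m.sum fun _ e => e :=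
                    (Finsupp.sum_fintype m (fun _ e => e) (fun _ => rfl)).symm
                _ ≤ ∑ i, t i := h1
            have hex : ∃ j, m j < t j := by
              by_contra hall
              push_neg at hall
              have hall2 : ∀ i, m i = t i := by
                intro i
                by_contra hne2
                have hlt : t i < m i := lt_of_le_of_ne (hall i) (Ne.symm hne2)
                have : ∑ i, t i < ∑ i, m i :=
                  Finset.sum_lt_sum (fun j _ => hall j) ⟨i, Finset.mem_univ i, hlt⟩
                omega
              exact hne (Finsupp.ext fun i => hall2 i)
            obtain ⟨j, hj⟩ := hex
            have hz : ∑ x ∈ T j, x ^ (m j) * Lagrange.nodalWeight (T j) id x = 0 := by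
              rw [cn_moment (T j) (m j) (by rw [hTcard j]; omega),
                if_neg (by rw [hTcard j]; omega)]
            rw [Finset.prod_eq_zero (Finset.mem_univ j) hz, mul_zero]
          · intro h
            rw [MvPolynomial.notMem_support_iff.mp h, zero_mul]
  have hz : ∑ s ∈ Fintype.piFinset T,
      MvPolynomial.eval s f * ∏ i, Lagrange.nodalWeight (T i) id (s i) = 0 := by
    refine Finset.sum_eq_zero fun s hs => ?_
    have hmem : ∀ i, s i ∈ S i := fun i =>
      hTsub i (Fintype.mem_piFinset.mp hs i)
    rw [hcon s hmem, zero_mul]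
  rw [hz] at key
  exact hcoeff key.symm
end

section
/- Combinatorial Nullstellensatz for zero-sum grids: Let F be a field and f ∈ F[x₁,…,xₙ] a polynomial of total degree 1 + t₁ + ⋯ + tₙ with tᵢ nonnegative integers. If the coefficient of ∏ xᵢ^{tᵢ} in f is nonzero and S₁,…,Sₙ ⊆ F are finite zero-sum sets (the sum of elements of each Sᵢ is 0) with |Sᵢ| > tᵢ, then there exist sᵢ ∈ Sᵢ with f(s₁,…,sₙ) ≠ 0. -/
open MvPolynomial

section Aux
open Polynomial Finset

open Polynomial Finset

variable {F : Type*} [Field F] [DecidableEq F]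

/-- Weighted sum over nodes of a polynomial of degree < card equals its top coefficient. -/
lemma weighted_sum_eq_coeff (S : Finset F) (p : F[X]) (hp : p.degree < S.card) :
    ∑ a ∈ S, p.eval a * Lagrange.nodalWeight S id a = p.coeff (S.card - 1) := by
  have hinj : Set.InjOn (id : F → F) S := fun x _ y _ h => h
  have hp' := Lagrange.eq_interpolate (v := id) (s := S) hinj hp
  conv_rhs => rw [hp']
  rw [Lagrange.interpolate_apply, Polynomial.finset_sum_coeff]
  refine Finset.sum_congr rfl fun a ha => ?_
  rw [Polynomial.coeff_C_mul]
  congr 1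
  rw [Lagrange.basis_eq_prod_sub_inv_mul_nodal_div ha,
    ← Lagrange.nodal_erase_eq_nodal_div ha, Polynomial.coeff_C_mul]
  have hmono : (Lagrange.nodal (S.erase a) (id : F → F)).Monic := Lagrange.nodal_monic
  have hdeg : (Lagrange.nodal (S.erase a) (id : F → F)).natDegree = S.card - 1 := by
    rw [Lagrange.natDegree_nodal, Finset.card_erase_of_mem ha]
  rw [← hdeg, hmono.coeff_natDegree, mul_one]

lemma weighted_sum_pow_lt (S : Finset F) {k : ℕ} (hk : k < S.card - 1) :
    ∑ a ∈ S, a ^ k * Lagrange.nodalWeight S id a = 0 := by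
  have := weighted_sum_eq_coeff S (Polynomial.X ^ k) (by
    rw [Polynomial.degree_X_pow]
    exact_mod_cast lt_of_lt_of_le hk (Nat.sub_le _ _))
  simp only [Polynomial.eval_pow, Polynomial.eval_X] at this
  rw [this, Polynomial.coeff_X_pow, if_neg (by omega)]

lemma weighted_sum_pow_eq (S : Finset F) (hS : S.Nonempty) :
    ∑ a ∈ S, a ^ (S.card - 1) * Lagrange.nodalWeight S id a = 1 := by
  have hc : 0 < S.card := Finset.card_pos.mpr hS
  have := weighted_sum_eq_coeff S (Polynomial.X ^ (S.card - 1)) (by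
    rw [Polynomial.degree_X_pow]
    exact_mod_cast Nat.sub_lt hc one_pos)
  simp only [Polynomial.eval_pow, Polynomial.eval_X] at this
  simpa [Polynomial.coeff_X_pow] using this

lemma weighted_sum_pow_card (S : Finset F) (hS : S.Nonempty) (hzero : ∑ x ∈ S, x = 0) :
    ∑ a ∈ S, a ^ S.card * Lagrange.nodalWeight S id a = 0 := by
  have hc : 0 < S.card := Finset.card_pos.mpr hS
  set q : F[X] := Polynomial.X ^ S.card - Lagrange.nodal S id with hq
  have hnd : (Lagrange.nodal S (id : F → F)).natDegree = S.card := Lagrange.natDegree_nodal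
  have hdeg : q.degree < S.card := by
    have h1 : ((X : F[X]) ^ S.card).degree = (Lagrange.nodal S (id : F → F)).degree := by
      rw [Polynomial.degree_X_pow, Lagrange.degree_nodal]
    have h2 : ((X : F[X]) ^ S.card) ≠ 0 := pow_ne_zero _ Polynomial.X_ne_zero
    have h3 : ((X : F[X]) ^ S.card).leadingCoeff = (Lagrange.nodal S (id : F → F)).leadingCoeff := by
      rw [(monic_X_pow _ : ((X:F[X]) ^ S.card).Monic).leadingCoeff,
        Lagrange.nodal_monic.leadingCoeff]
    calc q.degree < ((X : F[X]) ^ S.card).degree := Polynomial.degree_sub_lt h1 h2 h3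
      _ = S.card := by rw [Polynomial.degree_X_pow]
  have key := weighted_sum_eq_coeff S q hdeg
  have heval : ∀ a ∈ S, q.eval a = a ^ S.card := by
    intro a ha
    have : (Lagrange.nodal S (id : F → F)).eval a = 0 := Lagrange.eval_nodal_at_node (v := (id : F → F)) ha
    simp [hq, this]
  have hcoeff : q.coeff (S.card - 1) = ∑ x ∈ S, x := by
    have h4 : ((X : F[X]) ^ S.card).coeff (S.card - 1) = 0 := by
      rw [Polynomial.coeff_X_pow, if_neg (by omega)]
    have h5 : (Lagrange.nodal S (id : F → F)).coeff (S.card - 1) = -∑ x ∈ S, x := by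
      rw [Lagrange.nodal_eq]
      simpa using Polynomial.prod_X_sub_C_coeff_card_pred S (id : F → F) hc
    rw [hq, Polynomial.coeff_sub, h4, h5, zero_sub, neg_neg]
  rw [← hzero, ← hcoeff, ← key]
  exact Finset.sum_congr rfl fun a ha => by rw [heval a ha]

lemma grid_sum_eq_coeff {n : ℕ} (S : Fin n → Finset F) (hne : ∀ i, (S i).Nonempty)
    (hzero : ∀ i, ∑ x ∈ S i, x = 0) (g : MvPolynomial (Fin n) F)
    (hdeg : g.totalDegree ≤ 1 + ∑ i, ((S i).card - 1)) :
    ∑ s ∈ Fintype.piFinset S,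
        MvPolynomial.eval s g * ∏ i, Lagrange.nodalWeight (S i) id (s i) =
      MvPolynomial.coeff (Finsupp.equivFunOnFinite.symm (fun i => (S i).card - 1)) g := by
  classical
  set M : Fin n →₀ ℕ := Finsupp.equivFunOnFinite.symm (fun i => (S i).card - 1) with hM
  have hMi : ∀ i, M i = (S i).card - 1 := fun i => rfl
  have hterm : ∀ α ∈ g.support,
      ∏ i, (∑ a ∈ S i, a ^ (α i) * Lagrange.nodalWeight (S i) id a)
        = if α = M then 1 else 0 := by
    intro α hα
    have hsum : ∑ i, α i ≤ 1 + ∑ i, ((S i).card - 1) := by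
      have h1 := MvPolynomial.le_totalDegree hα
      rw [Finsupp.sum_fintype _ _ (fun i => rfl)] at h1
      exact h1.trans hdeg
    by_cases hall : ∀ i, (S i).card - 1 ≤ α i
    · have hub : ∀ j, α j ≤ (S j).card := by
        intro j
        have h1 : ∑ i ∈ univ.erase j, ((S i).card - 1) ≤ ∑ i ∈ univ.erase j, α i :=
          Finset.sum_le_sum fun i _ => hall i
        have h2 : ∑ i ∈ univ.erase j, α i + α j = ∑ i, α i :=
          Finset.sum_erase_add _ _ (mem_univ j)
        have h3 : ∑ i ∈ univ.erase j, ((S i).card - 1) + ((S j).card - 1)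
            = ∑ i, ((S i).card - 1) := Finset.sum_erase_add _ _ (mem_univ j)
        have hcj : 1 ≤ (S j).card := Finset.card_pos.mpr (hne j)
        omega
      by_cases hMeq : ∀ i, α i = (S i).card - 1
      · have hαM : α = M := Finsupp.ext fun i => by rw [hMeq i, hMi i]
        rw [if_pos hαM]
        refine Finset.prod_eq_one fun i _ => ?_
        rw [hMeq i]
        exact weighted_sum_pow_eq (S i) (hne i)
      · push_neg at hMeq
        obtain ⟨j, hj⟩ := hMeq
        have hαj : α j = (S j).card := by
          have := hall j; have := hub j
          have hcj : 1 ≤ (S j).card := Finset.card_pos.mpr (hne j)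
          omega
        rw [if_neg (fun h => hj (by rw [h, hMi j]))]
        refine Finset.prod_eq_zero (mem_univ j) ?_
        rw [hαj]
        exact weighted_sum_pow_card (S j) (hne j) (hzero j)
    · push_neg at hall
      obtain ⟨j, hj⟩ := hall
      rw [if_neg (fun h => absurd (by rw [h, hMi j]) (Nat.ne_of_lt hj))]
      exact Finset.prod_eq_zero (mem_univ j) (weighted_sum_pow_lt (S j) hj)
  calc ∑ s ∈ Fintype.piFinset S,
        MvPolynomial.eval s g * ∏ i, Lagrange.nodalWeight (S i) id (s i)
      = ∑ s ∈ Fintype.piFinset S, ∑ α ∈ g.support,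
          MvPolynomial.coeff α g * ∏ i, ((s i) ^ (α i) * Lagrange.nodalWeight (S i) id (s i)) := by
        refine Finset.sum_congr rfl fun s _ => ?_
        rw [MvPolynomial.eval_eq', Finset.sum_mul]
        exact Finset.sum_congr rfl fun α _ => by
          rw [mul_assoc, ← Finset.prod_mul_distrib]
    _ = ∑ α ∈ g.support, MvPolynomial.coeff α g * ∑ s ∈ Fintype.piFinset S,
          ∏ i, ((s i) ^ (α i) * Lagrange.nodalWeight (S i) id (s i)) := by
        rw [Finset.sum_comm]
        exact Finset.sum_congr rfl fun α _ => by rw [Finset.mul_sum]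
    _ = ∑ α ∈ g.support, MvPolynomial.coeff α g *
          ∏ i, (∑ a ∈ S i, a ^ (α i) * Lagrange.nodalWeight (S i) id a) := by
        refine Finset.sum_congr rfl fun α _ => ?_
        congr 1
        exact (Finset.prod_univ_sum S
          (fun i a => a ^ α i * Lagrange.nodalWeight (S i) id a)).symm
    _ = MvPolynomial.coeff M g := by
        rw [Finset.sum_congr rfl fun α hα => by rw [hterm α hα]]
        simp only [mul_ite, mul_one, mul_zero]
        rw [Finset.sum_ite_eq' g.support M (fun α => MvPolynomial.coeff α g)]
        by_cases hMs : M ∈ g.support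
        · rw [if_pos hMs]
        · rw [if_neg hMs, MvPolynomial.notMem_support_iff.mp hMs]

end Aux

theorem stmt_11 (F : Type*) [Field F] (n : ℕ) (f : MvPolynomial (Fin n) F)
    (t : Fin n → ℕ)
    (hdeg : f.totalDegree = 1 + ∑ i, t i)
    (hcoeff : MvPolynomial.coeff (Finsupp.equivFunOnFinite.symm t) f ≠ 0)
    (S : Fin n → Finset F)
    (hzero : ∀ i, ∑ x ∈ S i, x = 0)
    (hS : ∀ i, t i < (S i).card) :
    ∃ s : Fin n → F, (∀ i, s i ∈ S i) ∧ MvPolynomial.eval s f ≠ 0 := by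
  classical
  have hne : ∀ i, (S i).Nonempty := fun i =>
    Finset.card_pos.mp (by have := hS i; omega)
  set D : Fin n →₀ ℕ := Finsupp.equivFunOnFinite.symm (fun i => (S i).card - 1 - t i) with hD
  set g : MvPolynomial (Fin n) F := f * MvPolynomial.monomial D (1 : F) with hg
  have hMsplit : (Finsupp.equivFunOnFinite.symm (fun i => (S i).card - 1) : Fin n →₀ ℕ)
      = Finsupp.equivFunOnFinite.symm t + D := by
    apply Finsupp.ext
    intro i
    have := hS i
    show (S i).card - 1 = t i + ((S i).card - 1 - t i)
    omega
  have hcg : MvPolynomial.coeff (Finsupp.equivFunOnFinite.symm (fun i => (S i).card - 1)) g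
      = MvPolynomial.coeff (Finsupp.equivFunOnFinite.symm t) f := by
    rw [hg, hMsplit, MvPolynomial.coeff_mul_monomial, mul_one]
  have hdegg : g.totalDegree ≤ 1 + ∑ i, ((S i).card - 1) := by
    have h1 : g.totalDegree ≤ f.totalDegree + (MvPolynomial.monomial D (1 : F)).totalDegree :=
      MvPolynomial.totalDegree_mul _ _
    have h2 : (MvPolynomial.monomial D (1 : F)).totalDegree = ∑ i, ((S i).card - 1 - t i) := by
      rw [MvPolynomial.totalDegree_monomial _ (one_ne_zero : (1:F) ≠ 0)]
      rw [Finsupp.sum_fintype _ _ (fun i => rfl)]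
      rfl
    have h3 : ∑ i, t i + ∑ i, ((S i).card - 1 - t i) = ∑ i, ((S i).card - 1) := by
      rw [← Finset.sum_add_distrib]
      exact Finset.sum_congr rfl fun i _ => by have := hS i; omega
    calc g.totalDegree ≤ f.totalDegree + (MvPolynomial.monomial D (1 : F)).totalDegree := h1
      _ = 1 + ∑ i, ((S i).card - 1) := by rw [hdeg, h2, add_assoc, h3]
  have hsum := grid_sum_eq_coeff S hne hzero g hdegg
  rw [hcg] at hsum
  have hex : ∃ s ∈ Fintype.piFinset S,
      MvPolynomial.eval s g * ∏ i, Lagrange.nodalWeight (S i) id (s i) ≠ 0 := by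
    by_contra h
    push_neg at h
    rw [Finset.sum_eq_zero h] at hsum
    exact hcoeff hsum.symm
  obtain ⟨s, hs, hsne⟩ := hex
  refine ⟨s, fun i => (Fintype.mem_piFinset.mp hs) i, ?_⟩
  have hgne : MvPolynomial.eval s g ≠ 0 := left_ne_zero_of_mul hsne
  rw [hg, map_mul] at hgne
  exact left_ne_zero_of_mul hgne
end

section
/- The zero-sum Nullstellensatz in two variables over ℝ on the centered grid: if f ∈ ℝ[x,y] has total degree 8k+1, the coefficient of x^{4k} y^{4k} in f is nonzero, and S = {-2k, …, 2k}, then there exist s₁, s₂ ∈ S with f(s₁, s₂) ≠ 0. -/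
open MvPolynomial

open Polynomial in
theorem coeff_interp_aux {F : Type*} [Field F] {ι : Type*} [DecidableEq ι]
    (s : Finset ι) (v : ι → F) (r : ι → F) :
    (Lagrange.interpolate s v r).coeff (s.card - 1) =
      ∑ i ∈ s, r i * Lagrange.nodalWeight s v i := by
  rw [Lagrange.interpolate_apply, Polynomial.finset_sum_coeff]
  refine Finset.sum_congr rfl fun i hi => ?_
  have hb : Lagrange.basis s v i =
      Polynomial.C (Lagrange.nodalWeight s v i) * Lagrange.nodal (s.erase i) v := by
    unfold Lagrange.basis Lagrange.basisDivisor Lagrange.nodalWeight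
    rw [Lagrange.nodal_eq, map_prod, ← Finset.prod_mul_distrib]
  rw [hb, ← mul_assoc, ← Polynomial.C_mul, Polynomial.coeff_C_mul]
  have hmon : (Lagrange.nodal (s.erase i) v).Monic := Lagrange.nodal_monic
  have hdeg : (Lagrange.nodal (s.erase i) v).natDegree = s.card - 1 := by
    rw [Lagrange.natDegree_nodal, Finset.card_erase_of_mem hi]
  rw [← hdeg, hmon.coeff_natDegree, mul_one]

theorem stmt_12 (k : ℕ) (hk : 1 ≤ k) (f : MvPolynomial (Fin 2) ℝ)
    (hdeg : f.totalDegree = 8 * k + 1)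
    (hcoeff : MvPolynomial.coeff (Finsupp.single 0 (4 * k) + Finsupp.single 1 (4 * k)) f ≠ 0) :
    ∃ s₁ s₂ : ℝ,
      s₁ ∈ (Finset.Icc (-(2 * k : ℤ)) (2 * k)).image (fun m : ℤ => (m : ℝ)) ∧
      s₂ ∈ (Finset.Icc (-(2 * k : ℤ)) (2 * k)).image (fun m : ℤ => (m : ℝ)) ∧
      MvPolynomial.eval ![s₁, s₂] f ≠ 0 := by
  classical
  by_contra hcon
  push_neg at hcon
  set T : Finset ℤ := Finset.Icc (-(2 * k : ℤ)) (2 * k) with hT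
  set v : ℤ → ℝ := fun m => (m : ℝ) with hv
  have hinj : Set.InjOn v T := fun a _ b _ h => Int.cast_injective h
  set w : ℤ → ℝ := Lagrange.nodalWeight T v with hw
  set Λ : ℕ → ℝ := fun a => ∑ i ∈ T, (v i) ^ a * w i with hΛ
  have hcard : T.card = 4 * k + 1 := by
    rw [hT, Int.card_Icc]
    omega
  -- Λ a = coeff (4k) of the interpolation of X^a values
  have hΛle : ∀ a : ℕ, a ≤ 4 * k → Λ a = if 4 * k = a then 1 else 0 := by
    intro a ha
    have hdlt : ((Polynomial.X : Polynomial ℝ) ^ a).degree < T.card := by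
      rw [Polynomial.degree_X_pow, hcard]
      exact_mod_cast Nat.lt_succ_of_le (le_trans ha (by omega))
    have h1 := Lagrange.eq_interpolate hinj hdlt
    have h2 : Lagrange.interpolate T v (fun i => Polynomial.eval (v i) (Polynomial.X ^ a)) =
        Lagrange.interpolate T v (fun i => (v i) ^ a) := by
      apply Lagrange.interpolate_eq_of_values_eq_on
      intro i _
      simp
    have h3 : ((Polynomial.X : Polynomial ℝ) ^ a).coeff (4 * k) =
        (Lagrange.interpolate T v (fun i => (v i) ^ a)).coeff (T.card - 1) := by
      rw [← h2, ← h1, hcard]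
      congr 1
    rw [Polynomial.coeff_X_pow] at h3
    rw [hΛ]
    simp only []
    rw [← coeff_interp_aux T v (fun i => (v i) ^ a), ← h3]
  -- Λ (4k+1) = 0, using the zero-sum property
  have hmemneg : ∀ a ∈ T, -a ∈ T := by
    intro a ha
    simp only [hT, Finset.mem_Icc] at ha ⊢
    omega
  have hsumT : (∑ i ∈ T, (i : ℤ)) = 0 := by
    have hrev : ∑ i ∈ T, (i : ℤ) = ∑ i ∈ T, (-i : ℤ) := by
      apply Finset.sum_nbij' (fun a => -a) (fun a => -a) hmemneg hmemneg
        (by intro a _; ring) (by intro a _; ring) (by intro a _; ring)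
    rw [Finset.sum_neg_distrib] at hrev
    omega
  have hΛ41 : Λ (4 * k + 1) = 0 := by
    set g : Polynomial ℝ := Polynomial.X ^ (4 * k + 1) - Lagrange.nodal T v with hg
    have hnodeg : (Lagrange.nodal T v).degree = (4 * k + 1 : ℕ) := by
      rw [Lagrange.degree_nodal, hcard]
    have hdlt : g.degree < T.card := by
      have h0 : g.degree < ((Polynomial.X : Polynomial ℝ) ^ (4 * k + 1)).degree := by
        rw [hg]
        apply Polynomial.degree_sub_lt
        · rw [Polynomial.degree_X_pow, hnodeg]
        · exact pow_ne_zero _ Polynomial.X_ne_zero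
        · rw [Polynomial.leadingCoeff_X_pow]
          exact (Lagrange.nodal_monic).symm
      rw [Polynomial.degree_X_pow] at h0
      rw [hcard]
      exact h0
    have h1 := Lagrange.eq_interpolate hinj hdlt
    have h2 : Lagrange.interpolate T v (fun i => Polynomial.eval (v i) g) =
        Lagrange.interpolate T v (fun i => (v i) ^ (4 * k + 1)) := by
      apply Lagrange.interpolate_eq_of_values_eq_on
      intro i hi
      rw [hg]
      simp [Lagrange.eval_nodal_at_node hi]
    have h3 : g.coeff (4 * k) =
        (Lagrange.interpolate T v (fun i => (v i) ^ (4 * k + 1))).coeff (T.card - 1) := by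
      rw [← h2, ← h1, hcard]
      congr 1
    have hnc : (Lagrange.nodal T v).coeff (4 * k) = 0 := by
      have hnd : (Lagrange.nodal T v).natDegree = 4 * k + 1 := by
        rw [Lagrange.natDegree_nodal, hcard]
      have h4 := Polynomial.nextCoeff_of_natDegree_pos (p := Lagrange.nodal T v) (by omega)
      rw [hnd] at h4
      simp only [Nat.add_sub_cancel] at h4
      have h5 : (Lagrange.nodal T v).nextCoeff = -∑ i ∈ T, v i := by
        rw [Lagrange.nodal_eq]
        exact Polynomial.prod_X_sub_C_nextCoeff v
      have h6 : (∑ i ∈ T, v i) = 0 := by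
        simp only [hv]
        rw [← Int.cast_sum, hsumT, Int.cast_zero]
      rw [← h4, h5, h6, neg_zero]
    have h7 : g.coeff (4 * k) = 0 := by
      rw [hg, Polynomial.coeff_sub, Polynomial.coeff_X_pow, hnc]
      simp
    simp only [hΛ]
    rw [← coeff_interp_aux T v (fun i => (v i) ^ (4 * k + 1)), ← h3, h7]
  have hΛlt : ∀ a : ℕ, a < 4 * k → Λ a = 0 := by
    intro a ha
    rw [hΛle a (le_of_lt ha)]
    simp [Nat.ne_of_gt ha]
  have hΛeq : Λ (4 * k) = 1 := by
    rw [hΛle (4 * k) le_rfl]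
    simp
  -- the vanishing hypothesis
  have hz : ∀ i ∈ T, ∀ j ∈ T, MvPolynomial.eval ![v i, v j] f = 0 := by
    intro i hi j hj
    exact hcon (v i) (v j) (Finset.mem_image_of_mem _ hi) (Finset.mem_image_of_mem _ hj)
  -- evaluation formula
  have hev : ∀ x y : ℝ, MvPolynomial.eval ![x, y] f =
      ∑ d ∈ f.support, MvPolynomial.coeff d f * (x ^ d 0 * y ^ d 1) := by
    intro x y
    rw [MvPolynomial.eval_eq']
    refine Finset.sum_congr rfl fun d _ => ?_
    rw [Fin.prod_univ_two]
    simp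
  -- the big double sum identity
  have key : ∑ d ∈ f.support, MvPolynomial.coeff d f * (Λ (d 0) * Λ (d 1)) =
      ∑ i ∈ T, ∑ j ∈ T, (w i * w j) * MvPolynomial.eval ![v i, v j] f := by
    calc ∑ d ∈ f.support, MvPolynomial.coeff d f * (Λ (d 0) * Λ (d 1))
        = ∑ d ∈ f.support, ∑ i ∈ T, ∑ j ∈ T,
            MvPolynomial.coeff d f * ((v i ^ d 0 * w i) * (v j ^ d 1 * w j)) := by
          refine Finset.sum_congr rfl fun d _ => ?_
          simp only [hΛ]
          rw [Finset.sum_mul_sum, Finset.mul_sum]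
          exact Finset.sum_congr rfl fun i _ => by rw [Finset.mul_sum]
      _ = ∑ i ∈ T, ∑ j ∈ T, ∑ d ∈ f.support,
            MvPolynomial.coeff d f * ((v i ^ d 0 * w i) * (v j ^ d 1 * w j)) := by
          rw [Finset.sum_comm]
          exact Finset.sum_congr rfl fun i _ => Finset.sum_comm
      _ = ∑ i ∈ T, ∑ j ∈ T, (w i * w j) * MvPolynomial.eval ![v i, v j] f := by
          refine Finset.sum_congr rfl fun i _ => Finset.sum_congr rfl fun j _ => ?_
          rw [hev, Finset.mul_sum]
          exact Finset.sum_congr rfl fun d _ => by ring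
  have hrhs : ∑ i ∈ T, ∑ j ∈ T, (w i * w j) * MvPolynomial.eval ![v i, v j] f = 0 := by
    refine Finset.sum_eq_zero fun i hi => Finset.sum_eq_zero fun j hj => ?_
    rw [hz i hi j hj, mul_zero]
  set t : Fin 2 →₀ ℕ := Finsupp.single 0 (4 * k) + Finsupp.single 1 (4 * k) with ht
  have ht0 : t 0 = 4 * k := by
    rw [ht]
    simp [Finsupp.single_apply]
  have ht1 : t 1 = 4 * k := by
    rw [ht]
    simp [Finsupp.single_apply]
  have hlhs : ∑ d ∈ f.support, MvPolynomial.coeff d f * (Λ (d 0) * Λ (d 1)) =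
      MvPolynomial.coeff t f := by
    rw [Finset.sum_eq_single_of_mem t (MvPolynomial.mem_support_iff.mpr hcoeff)]
    · rw [ht0, ht1, hΛeq, one_mul, mul_one]
    · intro d hd hdt
      have hsum2 : d 0 + d 1 ≤ 8 * k + 1 := by
        have h8 := MvPolynomial.le_totalDegree hd
        rw [hdeg] at h8
        have h9 : (d.sum fun _ e => e) = ∑ i : Fin 2, d i :=
          Finsupp.sum_fintype _ _ (fun _ => rfl)
        rw [Fin.sum_univ_two] at h9
        omega
      have hne : ¬(d 0 = 4 * k ∧ d 1 = 4 * k) := by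
        rintro ⟨h0, h1⟩
        apply hdt
        ext i
        fin_cases i
        · show d 0 = t 0
          rw [h0, ht0]
        · show d 1 = t 1
          rw [h1, ht1]
      suffices hΛz : Λ (d 0) * Λ (d 1) = 0 by rw [hΛz, mul_zero]
      rcases Nat.lt_or_ge (d 0) (4 * k) with h | h
      · rw [hΛlt _ h, zero_mul]
      rcases Nat.lt_or_ge (d 1) (4 * k) with h1 | h1
      · rw [hΛlt _ h1, mul_zero]
      have h2 : d 0 = 4 * k + 1 ∨ d 1 = 4 * k + 1 := by omega
      rcases h2 with h2 | h2
      · rw [h2, hΛ41, zero_mul]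
      · rw [h2, hΛ41, mul_zero]
  apply hcoeff
  rw [← hlhs, key, hrhs]
end

section
/- Parity obstruction for covering a rectangle perimeter by diagonals: Suppose the 8k boundary points of a (2k+1)×(2k+1) grid-aligned square (its four sides C_a, C_b, R_{a'}, R_{b'}, with corners (a,a'), (a,b'), (b,a'), (b,b')) must each be covered by one of 2k lines of slope +1 and 2k lines of slope -1, where each line covers at most 2 of these points, the slope -1 diagonal through (a,b') and (b,a') is used, and the slope +1 diagonal through (a,a') and (b,b') is used. If every line covers exactly 2 boundary points, then the number of slope +1 lines needed is odd, contradicting that it equals 2k. Hence no such covering exists. -/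
/-!
Write `n = 2k`, `w = a' - a - n` and `v = a' + a`. A boundary point `(x, y)` lies on the
slope `+1` line `y - x = d` with `d ∈ [w, w + 2n]` and on the slope `-1` line `y + x = s` with
`s ∈ [v, v + 2n]`. Let `p₋, p₊` count the chosen `d` in `(w, w + n)`, `(w + n, w + 2n)` and
`m₋, m₊` the chosen `s` in `(v, v + n)`, `(v + n, v + 2n)`. Each open side has `n - 1` points
and meets each of these lines at most once, so the four sides give
`p₊ + m₋, p₋ + m₊, p₋ + m₋, p₊ + m₊ ≥ n - 1`. Hence at most two of the chosen lines are among
the six lines `d ∈ {w, w + n, w + 2n}`, `s ∈ {v, v + n, v + 2n}` that carry the corners, and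
two of them only cover the four corners if they are the main diagonals `d = w + n`, `s = v + n`.
Then `p₋ + p₊ = m₋ + m₊ = n - 1` and all four side inequalities are tight, so `m₋ = m₊` and
`2m₋ = n - 1` would be odd.
-/

/-- The perimeter of the axis-aligned square with corners `(a,a')` and `(b,b')`:
lattice points in the square lying on its boundary. -/
def squarePerimeter (a b a' b' : ℤ) : Set (ℤ × ℤ) :=
  {p | a ≤ p.1 ∧ p.1 ≤ b ∧ a' ≤ p.2 ∧ p.2 ≤ b' ∧
       (p.1 = a ∨ p.1 = b ∨ p.2 = a' ∨ p.2 = b')}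

open Finset

theorem card_le_card_inter_add_card_inter {α β : Type*} [DecidableEq β] {A : Finset α}
    {S T I J : Finset β} {f g : α → β} (hfI : Set.MapsTo f A I) (hgJ : Set.MapsTo g A J)
    (hf : Set.InjOn f A) (hg : Set.InjOn g A) (hcov : ∀ i ∈ A, f i ∈ S ∨ g i ∈ T) :
    #A ≤ #(S ∩ I) + #(T ∩ J) := by
  classical
  calc #A ≤ #(A.filter (f · ∈ S)) + #(A.filter (g · ∈ T)) := by
        refine (card_le_card fun i hi => ?_).trans (card_union_le _ _)
        simpa [hi] using hcov i hi
    _ ≤ #(S ∩ I) + #(T ∩ J) := by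
        gcongr
        · exact card_le_card_of_injOn f
            (fun i hi => mem_inter.2 ⟨(mem_filter.1 hi).2, hfI (mem_filter.1 hi).1⟩)
            (hf.mono fun i hi => (mem_filter.1 hi).1)
        · exact card_le_card_of_injOn g
            (fun i hi => mem_inter.2 ⟨(mem_filter.1 hi).2, hgJ (mem_filter.1 hi).1⟩)
            (hg.mono fun i hi => (mem_filter.1 hi).1)

theorem card_inter_Ioo_add_card_inter_Ioo_add_ite_le {α : Type*} [LinearOrder α]
    [LocallyFiniteOrder α] (S : Finset α) {x y z : α} (hxy : x < y) (hyz : y < z) :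
    #(S ∩ Ioo x y) + #(S ∩ Ioo y z) + ((if x ∈ S then 1 else 0) + (if y ∈ S then 1 else 0) +
      (if z ∈ S then 1 else 0)) ≤ #S := by
  have hends : (if x ∈ S then 1 else 0) + (if y ∈ S then 1 else 0) + (if z ∈ S then 1 else 0)
      = #(({x, y, z} : Finset α).filter (· ∈ S)) := by
    rw [card_filter,
      sum_insert (by simp only [mem_insert, mem_singleton, not_or]; constructor <;> order),
      sum_insert (by simp only [mem_singleton]; order), sum_singleton, add_assoc]
  rw [hends, ← card_union_of_disjoint, ← card_union_of_disjoint]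
  · exact card_le_card (union_subset (union_subset inter_subset_left inter_subset_left)
      fun t ht => (mem_filter.1 ht).2)
  all_goals
    refine disjoint_left.2 fun t h₁ h₂ => ?_
    simp only [mem_union, mem_inter, mem_Ioo, mem_filter, mem_insert, mem_singleton] at h₁ h₂
    grind

def DiagonalCover (P M : Finset ℤ) (X : Set (ℤ × ℤ)) : Prop :=
  ∀ p ∈ X, p.2 - p.1 ∈ P ∨ p.2 + p.1 ∈ M

namespace DiagonalCover

variable {P M : Finset ℤ} {a a' n : ℤ}

theorem side_le_card_add_card_of_vertical
    (h : DiagonalCover P M (squarePerimeter a (a + n) a' (a' + n)))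
    (x p m : ℤ) (hx : x = a ∨ x = a + n) (hp : a' - x = p) (hm : a' + x = m) :
    (n - 1).toNat ≤ #(P ∩ Ioo p (p + n)) + #(M ∩ Ioo m (m + n)) := by
  calc (n - 1).toNat = #(Ioo a' (a' + n)) := by rw [Int.card_Ioo]; congr 1; ring
    _ ≤ _ := card_le_card_inter_add_card_inter (f := (· - x)) (g := (· + x))
      (fun y hy => by simp only [coe_Ioo, Set.mem_Ioo] at hy ⊢; omega)
      (fun y hy => by simp only [coe_Ioo, Set.mem_Ioo] at hy ⊢; omega)
      sub_left_injective.injOn (add_left_injective x).injOn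
      fun y hy => h (x, y) <| by
        simp only [mem_Ioo] at hy
        simp only [squarePerimeter, Set.mem_ofPred_eq]
        omega

theorem side_le_card_add_card_of_horizontal
    (h : DiagonalCover P M (squarePerimeter a (a + n) a' (a' + n)))
    (y p m : ℤ) (hy : y = a' ∨ y = a' + n) (hp : y - a - n = p) (hm : y + a = m) :
    (n - 1).toNat ≤ #(P ∩ Ioo p (p + n)) + #(M ∩ Ioo m (m + n)) := by
  calc (n - 1).toNat = #(Ioo a (a + n)) := by rw [Int.card_Ioo]; congr 1; ring
    _ ≤ _ := card_le_card_inter_add_card_inter (f := (y - ·)) (g := (y + ·))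
      (fun x hx => by simp only [coe_Ioo, Set.mem_Ioo] at hx ⊢; omega)
      (fun x hx => by simp only [coe_Ioo, Set.mem_Ioo] at hx ⊢; omega)
      (sub_right_injective (b := y)).injOn (add_right_injective y).injOn
      fun x hx => h (x, y) <| by
        simp only [mem_Ioo] at hx
        simp only [squarePerimeter, Set.mem_ofPred_eq]
        omega

theorem one_le_ite_add_ite (h : DiagonalCover P M (squarePerimeter a (a + n) a' (a' + n)))
    (hn : 0 ≤ n) (x y d s : ℤ) (hx : x = a ∨ x = a + n) (hy : y = a' ∨ y = a' + n)
    (hd : y - x = d) (hs : y + x = s) :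
    1 ≤ (if d ∈ P then 1 else 0) + (if s ∈ M then 1 else 0) := by
  subst hd hs
  rcases h (x, y) (by simp only [squarePerimeter, Set.mem_ofPred_eq]; omega) with h | h <;>
    simp [h]

end DiagonalCover

theorem stmt_15 (k : ℕ) (hk : 1 ≤ k) (a b a' b' : ℤ)
    (hb : b = a + 2 * k) (hb' : b' = a' + 2 * k)
    (Dplus Dminus : Finset ℤ)
    (hDplus : Dplus.card = 2 * k) (hDminus : Dminus.card = 2 * k) :
    ¬ (∀ p ∈ squarePerimeter a b a' b',
        (p.2 - p.1) ∈ Dplus ∨ (p.2 + p.1) ∈ Dminus) := by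
  subst hb hb'
  change ¬ DiagonalCover Dplus Dminus _
  intro h
  obtain ⟨n, hn⟩ : ∃ n : ℤ, 2 * k = n := ⟨_, rfl⟩
  rw [hn] at h
  obtain ⟨w, hw⟩ : ∃ w, a' - a - n = w := ⟨_, rfl⟩
  obtain ⟨v, hv⟩ : ∃ v, a' + a = v := ⟨_, rfl⟩
  have left := h.side_le_card_add_card_of_vertical a (w + n) v (by omega) (by omega) (by omega)
  have right := h.side_le_card_add_card_of_vertical (a + n) w (v + n)
    (by omega) (by omega) (by omega)
  have bottom := h.side_le_card_add_card_of_horizontal a' w v (by omega) (by omega) (by omega)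
  have top := h.side_le_card_add_card_of_horizontal (a' + n) (w + n) (v + n)
    (by omega) (by omega) (by omega)
  have corner₁ := h.one_le_ite_add_ite (by omega) a a' (w + n) v
    (by omega) (by omega) (by omega) (by omega)
  have corner₂ := h.one_le_ite_add_ite (by omega) a (a' + n) (w + n + n) (v + n)
    (by omega) (by omega) (by omega) (by omega)
  have corner₃ := h.one_le_ite_add_ite (by omega) (a + n) a' w (v + n)
    (by omega) (by omega) (by omega) (by omega)
  have corner₄ := h.one_le_ite_add_ite (by omega) (a + n) (a' + n) (w + n) (v + n + n)
    (by omega) (by omega) (by omega) (by omega)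
  have hP := card_inter_Ioo_add_card_inter_Ioo_add_ite_le Dplus (x := w) (y := w + n)
    (z := w + n + n) (by omega) (by omega)
  have hM := card_inter_Ioo_add_card_inter_Ioo_add_ite_le Dminus (x := v) (y := v + n)
    (z := v + n + n) (by omega) (by omega)
  omega
end
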